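/- arXiv:2407.06610 — 5 statements merged into one kernel-verified Lean document; each statement's English description precedes it below -/
import Mathlib

section
/- In the finite quadratic module D = (ℤ/Nℤ)² ⊕ (ℤ/N'ℤ)² with q(w,x,y,z) = wx/N + yz/N' ∈ ℚ/ℤ (N' | N), for coprime integers a, c with c ≥ 0 and M = gcd(N/N', c), the subgroup H generated by (Na/(N'M), 0, 0, -c/M) and (0, c, a, 0) is a self-dual isotropic subgroup of D. -/
/-- The finite quadratic module `(ℤ/Nℤ)² ⊕ (ℤ/N'ℤ)²`. -/
abbrev Dty (N N' : ℕ) := (ZMod N × ZMod N) × (ZMod N' × ZMod N')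

/-- The quadratic form `q(w,x,y,z) = wx/N + yz/N'` valued in `ℚ/ℤ`. -/
noncomputable def qD (N N' : ℕ) (x : Dty N N') : AddCircle (1 : ℚ) :=
  ((x.1.1.val * x.1.2.val / (N : ℚ) + x.2.1.val * x.2.2.val / (N' : ℚ) : ℚ) : AddCircle (1 : ℚ))

/-- `M = gcd(N/N', c)`. -/
def Mgcd (N N' : ℕ) (c : ℤ) : ℤ := Nat.gcd (N / N') c.natAbs

/-- The subgroup `H¹_{a,c}` generated by `(Na/(N'M), 0, 0, -c/M)` and `(0, c, a, 0)`. -/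
def H1 (N N' : ℕ) (a c : ℤ) : AddSubgroup (Dty N N') :=
  AddSubgroup.closure
    { (((((N : ℤ) / ((N' : ℤ) * Mgcd N N' c) * a : ℤ) : ZMod N), (0 : ZMod N)),
        ((0 : ZMod N'), ((-(c / Mgcd N N' c) : ℤ) : ZMod N'))),
      (((0 : ZMod N), (c : ZMod N)), ((a : ZMod N'), (0 : ZMod N'))) }

/-- The subgroup `H²_{a,c}` generated by `(Na/(N'M), 0, c/M, 0)` and `(0, c, 0, -a)`. -/
def H2 (N N' : ℕ) (a c : ℤ) : AddSubgroup (Dty N N') :=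
  AddSubgroup.closure
    { (((((N : ℤ) / ((N' : ℤ) * Mgcd N N' c) * a : ℤ) : ZMod N), (0 : ZMod N)),
        (((c / Mgcd N N' c : ℤ) : ZMod N'), (0 : ZMod N'))),
      (((0 : ZMod N), (c : ZMod N)), ((0 : ZMod N'), ((-a : ℤ) : ZMod N'))) }

/-!
With `M = gcd(N/N', c)` write `N = N'·M·K` and `c = M·c'`, so that `gcd(K, c') = 1`. The subgroup
consists of the vectors `(mKa, nc, na, -mc')`, on which `q` vanishes identically. Conversely, a
vector `(w, x, y, z)` orthogonal to the two generators satisfies `ax ≡ cy (mod N'M)` and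
`c'w + Kaz ≡ 0 (mod N'K)`. A Bézout argument turns the first congruence into an `n` with
`x ≡ nc (mod N)`, `y ≡ na (mod N')`, and the second into an `m` with `w ≡ mKa (mod N)`,
`z ≡ -mc' (mod N')`.
-/

theorem AddCircle.coe_intCast_div_eq_zero_iff {n : ℤ} (hn : n ≠ 0) (A : ℤ) :
    ((A / n : ℚ) : AddCircle (1 : ℚ)) = 0 ↔ n ∣ A := by
  have hnQ : (n : ℚ) ≠ 0 := by exact_mod_cast hn
  rw [AddCircle.coe_eq_zero_iff]
  constructor
  · rintro ⟨k, hk⟩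
    rw [zsmul_one, eq_div_iff hnQ] at hk
    exact ⟨k, by rw [mul_comm]; exact_mod_cast hk.symm⟩
  · rintro ⟨k, rfl⟩
    exact ⟨k, by simp [hnQ]⟩

theorem AddCircle.coe_intCast_div_eq_of_modEq {n A B : ℤ} (h : A ≡ B [ZMOD n]) :
    ((A / n : ℚ) : AddCircle (1 : ℚ)) = ((B / n : ℚ) : AddCircle (1 : ℚ)) := by
  rcases eq_or_ne n 0 with rfl | hn
  · simp
  rw [← sub_eq_zero, ← AddCircle.coe_sub, ← sub_div, ← Int.cast_sub,
    coe_intCast_div_eq_zero_iff hn]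
  exact h.symm.dvd

theorem exists_modEq_mul_and_modEq_mul {Q g P α β x y : ℤ} (hαβ : IsCoprime (g * α) β)
    (hPα : IsCoprime P α) (h : Q * g ∣ β * x - g * α * y) :
    ∃ n : ℤ, x ≡ n * (g * α) [ZMOD Q * (g * P)] ∧ y ≡ n * β [ZMOD Q] := by
  simp only [Int.modEq_iff_dvd]
  obtain ⟨u, v, huv⟩ := hαβ
  obtain ⟨r, s, hrs⟩ := hPα
  obtain ⟨W, hW⟩ := h
  -- `u x + v y` solves both congruences modulo `Q g`; adding `s v W Q` lifts the first one to
  -- modulus `Q g P` without disturbing the second modulo `Q`.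
  refine ⟨u * x + v * y + s * v * W * Q, ⟨-(v * W * r), ?_⟩, ⟨u * g * W + s * v * W * β, ?_⟩⟩
  · linear_combination x * huv - v * hW + v * W * Q * g * hrs
  · linear_combination y * huv + u * hW

namespace Dty

variable {N N' : ℕ}

def ofInt (w x y z : ℤ) : Dty N N' :=
  (((w : ZMod N), (x : ZMod N)), ((y : ZMod N'), (z : ZMod N')))

theorem ofInt_add (w x y z w' x' y' z' : ℤ) :
    (ofInt w x y z + ofInt w' x' y' z' : Dty N N') =
      ofInt (w + w') (x + x') (y + y') (z + z') := by
  simp [ofInt]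

theorem zsmul_ofInt (m w x y z : ℤ) :
    (m • ofInt w x y z : Dty N N') = ofInt (m * w) (m * x) (m * y) (m * z) := by
  simp [ofInt]

theorem exists_eq_ofInt (u : Dty N N') : ∃ w x y z : ℤ, u = ofInt w x y z :=
  ⟨ZMod.cast u.1.1, ZMod.cast u.1.2, ZMod.cast u.2.1, ZMod.cast u.2.2, by
    simp [ofInt]⟩

theorem ofInt_eq_ofInt_iff {w x y z w' x' y' z' : ℤ} :
    (ofInt w x y z : Dty N N') = ofInt w' x' y' z' ↔
      w ≡ w' [ZMOD N] ∧ x ≡ x' [ZMOD N] ∧ y ≡ y' [ZMOD N'] ∧ z ≡ z' [ZMOD N'] := by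
  simp only [ofInt, Prod.mk.injEq, ZMod.intCast_eq_intCast_iff, and_assoc]

theorem mem_closure_pair_ofInt_iff {u : Dty N N'} {w x y z w' x' y' z' : ℤ} :
    u ∈ AddSubgroup.closure {ofInt w x y z, ofInt w' x' y' z'} ↔
      ∃ m n : ℤ, ofInt (m * w + n * w') (m * x + n * x') (m * y + n * y') (m * z + n * z') = u := by
  simp only [AddSubgroup.mem_closure_pair, zsmul_ofInt, ofInt_add]

end Dty

noncomputable def polarD (N N' : ℕ) (u v : Dty N N') : AddCircle (1 : ℚ) :=
  qD N N' (u + v) - qD N N' u - qD N N' v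

section QuadraticForm

variable {N N' : ℕ} [NeZero N] [NeZero N'] {P : ℤ}

theorem qD_ofInt (hN : (N : ℤ) = N' * P) (w x y z : ℤ) :
    qD N N' (Dty.ofInt w x y z) =
      (((w * x + P * (y * z) : ℤ) / (N : ℤ) : ℚ) : AddCircle (1 : ℚ)) := by
  have hval (n : ℕ) [NeZero n] (b : ℤ) : (((b : ZMod n).val : ℕ) : ℚ) = ((b % n : ℤ) : ℚ) := by
    exact_mod_cast ZMod.val_intCast b
  have hN'Q : (N' : ℚ) ≠ 0 := by exact_mod_cast NeZero.ne N'
  have hNQ : (N : ℚ) = N' * P := by exact_mod_cast hN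
  have hPQ : (P : ℚ) ≠ 0 := right_ne_zero_of_mul (hNQ ▸ Nat.cast_ne_zero.mpr (NeZero.ne N))
  calc qD N N' (Dty.ofInt w x y z)
      = (((w % N * (x % N) : ℤ) / (N : ℤ) : ℚ) : AddCircle (1 : ℚ)) +
          (((y % N' * (z % N') : ℤ) / (N' : ℤ) : ℚ) : AddCircle (1 : ℚ)) := by
        simp only [qD, Dty.ofInt, hval, ← AddCircle.coe_add]
        push_cast
        rfl
    _ = (((w * x : ℤ) / (N : ℤ) : ℚ) : AddCircle (1 : ℚ)) +
          (((y * z : ℤ) / (N' : ℤ) : ℚ) : AddCircle (1 : ℚ)) := by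
        rw [AddCircle.coe_intCast_div_eq_of_modEq ((Int.mod_modEq w N).mul (Int.mod_modEq x N)),
          AddCircle.coe_intCast_div_eq_of_modEq ((Int.mod_modEq y N').mul (Int.mod_modEq z N'))]
    _ = _ := by
        rw [← AddCircle.coe_add]
        congr 1
        push_cast
        rw [hNQ]
        field_simp

theorem qD_ofInt_eq_zero_iff (hN : (N : ℤ) = N' * P) {w x y z : ℤ} :
    qD N N' (Dty.ofInt w x y z) = 0 ↔ (N : ℤ) ∣ w * x + P * (y * z) := by
  rw [qD_ofInt hN, AddCircle.coe_intCast_div_eq_zero_iff (by exact_mod_cast NeZero.ne N)]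

theorem polarD_ofInt_eq_zero_iff (hN : (N : ℤ) = N' * P) {w x y z w' x' y' z' : ℤ} :
    polarD N N' (Dty.ofInt w x y z) (Dty.ofInt w' x' y' z') = 0 ↔
      (N : ℤ) ∣ w * x' + w' * x + P * (y * z' + y' * z) := by
  have hexpand : (w + w') * (x + x') + P * ((y + y') * (z + z')) - (w * x + P * (y * z)) -
      (w' * x' + P * (y' * z')) = w * x' + w' * x + P * (y * z' + y' * z) := by ring
  rw [polarD, Dty.ofInt_add, qD_ofInt hN, qD_ofInt hN, qD_ofInt hN, ← AddCircle.coe_sub,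
    ← AddCircle.coe_sub, ← sub_div, ← sub_div, ← Int.cast_sub, ← Int.cast_sub, hexpand,
    AddCircle.coe_intCast_div_eq_zero_iff (by exact_mod_cast NeZero.ne N)]

end QuadraticForm

section SelfDual

variable {N N' : ℕ} [NeZero N] [NeZero N'] {M K a c c' : ℤ}

theorem qD_eq_zero_of_mem_closure (hN : (N : ℤ) = N' * (M * K)) (hc : c = M * c')
    {u : Dty N N'} (hu : u ∈ AddSubgroup.closure {Dty.ofInt (K * a) 0 0 (-c'), Dty.ofInt 0 c a 0}) :
    qD N N' u = 0 := by
  obtain ⟨m, n, rfl⟩ := Dty.mem_closure_pair_ofInt_iff.mp hu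
  rw [qD_ofInt_eq_zero_iff hN, hc]
  exact ⟨0, by ring⟩

theorem mem_closure_of_polarD_eq_zero (hN : (N : ℤ) = N' * (M * K)) (hc : c = M * c')
    (hac : IsCoprime a c) (hKc' : IsCoprime K c') {u : Dty N N'}
    (h₁ : polarD N N' u (Dty.ofInt (K * a) 0 0 (-c')) = 0)
    (h₂ : polarD N N' u (Dty.ofInt 0 c a 0) = 0) :
    u ∈ AddSubgroup.closure {Dty.ofInt (K * a) 0 0 (-c'), Dty.ofInt 0 c a 0} := by
  subst hc
  have hMK : M * K ≠ 0 := right_ne_zero_of_mul (hN ▸ Int.natCast_ne_zero.mpr (NeZero.ne N))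
  obtain ⟨w, x, y, z, rfl⟩ := Dty.exists_eq_ofInt u
  rw [polarD_ofInt_eq_zero_iff hN, hN] at h₁ h₂
  have h₁' : (N' : ℤ) * M ∣ a * x - M * c' * y := by
    rw [show w * 0 + K * a * x + M * K * (y * -c' + 0 * z) = (a * x - M * c' * y) * K by ring,
      ← mul_assoc] at h₁
    exact (mul_dvd_mul_iff_right (right_ne_zero_of_mul hMK)).mp h₁
  have h₂' : (N' : ℤ) * K ∣ -c' * w - K * a * z := by
    rw [show w * (M * c') + 0 * x + M * K * (y * 0 + a * z) = -(M * (-c' * w - K * a * z)) by ring,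
      dvd_neg, mul_left_comm] at h₂
    exact (mul_dvd_mul_iff_left (left_ne_zero_of_mul hMK)).mp h₂
  obtain ⟨n, hx, hy⟩ := exists_modEq_mul_and_modEq_mul hac.symm hKc' h₁'
  obtain ⟨m, hw, hz⟩ := exists_modEq_mul_and_modEq_mul
    ((hKc'.mul_left hac.of_mul_right_right).neg_right) hac.of_mul_right_left.symm h₂'
  rw [mul_comm K M, ← hN] at hw
  rw [← hN] at hx
  refine Dty.mem_closure_pair_ofInt_iff.mpr ⟨m, n, Dty.ofInt_eq_ofInt_iff.mpr ?_⟩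
  simp only [mul_zero, add_zero, zero_add]
  exact ⟨hw.symm, hx.symm, hy.symm, hz.symm⟩

end SelfDual

section Mgcd

variable {N N' : ℕ}

theorem Mgcd_eq_gcd (c : ℤ) : Mgcd N N' c = Int.gcd ((N / N' : ℕ) : ℤ) c := rfl

theorem Mgcd_dvd (c : ℤ) : Mgcd N N' c ∣ c := Int.gcd_dvd_right ((N / N' : ℕ) : ℤ) c

theorem natCast_div_mul_Mgcd (hN' : 0 < N') (hdvd : N' ∣ N) (c : ℤ) :
    (N : ℤ) / (N' * Mgcd N N' c) = ((N / N' : ℕ) : ℤ) / Mgcd N N' c := by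
  rw [← Nat.mul_div_cancel' hdvd, Nat.mul_div_cancel_left _ hN', Nat.cast_mul,
    Int.mul_ediv_mul_of_pos _ _ (by exact_mod_cast hN')]

theorem natCast_eq_mul_Mgcd_mul (hN' : 0 < N') (hdvd : N' ∣ N) (c : ℤ) :
    (N : ℤ) = N' * (Mgcd N N' c * ((N : ℤ) / (N' * Mgcd N N' c))) := by
  rw [natCast_div_mul_Mgcd hN' hdvd, Mgcd_eq_gcd, Int.mul_ediv_cancel' (Int.gcd_dvd_left _ c)]
  exact_mod_cast (Nat.mul_div_cancel' hdvd).symm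

theorem isCoprime_div_Mgcd (hN : 0 < N) (hN' : 0 < N') (hdvd : N' ∣ N) (c : ℤ) :
    IsCoprime ((N : ℤ) / (N' * Mgcd N N' c)) (c / Mgcd N N' c) := by
  rw [natCast_div_mul_Mgcd hN' hdvd, Int.isCoprime_iff_gcd_eq_one, Mgcd_eq_gcd]
  refine Int.gcd_ediv_gcd_ediv_gcd (Int.gcd_pos_of_ne_zero_left _ ?_)
  exact_mod_cast (Nat.div_pos (Nat.le_of_dvd hN hdvd) hN').ne'

end Mgcd

theorem H1_eq_closure (N N' : ℕ) (a c : ℤ) :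
    H1 N N' a c = AddSubgroup.closure
      {Dty.ofInt ((N : ℤ) / (N' * Mgcd N N' c) * a) 0 0 (-(c / Mgcd N N' c)), Dty.ofInt 0 c a 0} := by
  simp only [H1, Dty.ofInt, Int.cast_zero]

theorem stmt2_general (N N' : ℕ) (hN : 0 < N) (hN' : 0 < N') (hdvd : N' ∣ N)
    (a c : ℤ) (hcop : Int.gcd a c = 1) :
    (∀ x ∈ H1 N N' a c, qD N N' x = 0) ∧
    (∀ x : Dty N N', x ∈ H1 N N' a c ↔
      ∀ h ∈ H1 N N' a c, qD N N' (x + h) - qD N N' x - qD N N' h = 0) := by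
  have : NeZero N := ⟨hN.ne'⟩
  have : NeZero N' := ⟨hN'.ne'⟩
  have hNMK := natCast_eq_mul_Mgcd_mul hN' hdvd c
  have hcM := (Int.mul_ediv_cancel' (Mgcd_dvd (N := N) (N' := N') c)).symm
  have hiso : ∀ x ∈ H1 N N' a c, qD N N' x = 0 := fun x hx =>
    qD_eq_zero_of_mem_closure hNMK hcM (H1_eq_closure N N' a c ▸ hx)
  refine ⟨hiso, fun x => ⟨fun hx h hh => ?_, fun hperp => ?_⟩⟩
  · rw [hiso _ (add_mem hx hh), hiso x hx, hiso h hh, sub_zero, sub_zero]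
  · rw [H1_eq_closure] at hperp ⊢
    exact mem_closure_of_polarD_eq_zero hNMK hcM (Int.isCoprime_iff_gcd_eq_one.mpr hcop)
      (isCoprime_div_Mgcd hN hN' hdvd c) (hperp _ (AddSubgroup.subset_closure (by simp)))
      (hperp _ (AddSubgroup.subset_closure (by simp)))

/-- For coprime `a, c` with `c ≥ 0`, the subgroup `H¹_{a,c}` is a self-dual
isotropic subgroup of `(ℤ/Nℤ)² ⊕ (ℤ/N'ℤ)²`. -/
theorem stmt2 (N N' : ℕ) (hN : 0 < N) (hN' : 0 < N') (hdvd : N' ∣ N)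
    (a c : ℤ) (hcop : Int.gcd a c = 1) (hc : 0 ≤ c) :
    (∀ x ∈ H1 N N' a c, qD N N' x = 0) ∧
    (∀ x : Dty N N', x ∈ H1 N N' a c ↔
      ∀ h ∈ H1 N N' a c, qD N N' (x + h) - qD N N' x - qD N N' h = 0) :=
  stmt2_general N N' hN hN' hdvd a c hcop
end

section
/- Let p be prime, r ≥ r' ≥ 1. The number of distinct self-dual isotropic subgroups of D = (ℤ/p^rℤ)² ⊕ (ℤ/p^{r'}ℤ)² (with q(w,x,y,z) = wx/p^r + yz/p^{r'}) of the form H^1_{a,c} or H^2_{a,c} (types of one-dimensional cusps) equals 2((r - r' + 1)p^{r'} - (r - r' - 1)p^{r'-1}). -/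
/-!
After reordering coordinates, `H¹_{a,c}` is the direct sum of the cyclic subgroup of
`ℤ/p^r × ℤ/p^{r'}` generated by `(p^r a/(p^{r'}M), -c/M)` (in the coordinates `w, z`) and the one
generated by `(c, a)` (in the coordinates `x, y`), and `H²_{a,c}` is the image of `H¹_{-a,c}` under
the swap `y ↔ z`. For coprime `(a, c)` the first summand is determined by the second (a unit
relating two generators `(c, a)` can be adjusted to relate the first generators as well), so
`H¹_{a,c}` is determined by the line through `(c, a)`. Every such line has exactly one generator of the form
`(1, t)` with `t < p^{r'}`, `(p^k u, 1)` with `1 ≤ k ≤ r - r'` and `u < p^{r'}` prime to `p`, or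
`(p^{r-r'+1} w, 1)` with `w < p^{r'-1}`, which gives `p^{r'} + (r - r')φ(p^{r'}) + p^{r'-1}`
subgroups `H¹`. No `H¹` equals an `H²`: the line through `(c, a)` would then contain `(c, 0)` and
`(0, a)`, forcing `p^{r'} ∣ a` or `p^r ∣ c`, and in these cases both subgroups are products of
coordinate axes, which differ.
-/

open AddSubgroup

lemma Int.ModEq.cancel_right_of_isCoprime {m a b c : ℤ} (hc : IsCoprime c m)
    (h : a * c ≡ b * c [ZMOD m]) : a ≡ b [ZMOD m] := by
  rw [Int.modEq_iff_dvd, ← sub_mul] at *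
  exact hc.symm.dvd_of_dvd_mul_right h

lemma Int.exists_mul_modEq_one_of_isCoprime {c m : ℤ} (h : IsCoprime c m) :
    ∃ u : ℤ, u * c ≡ 1 [ZMOD m] ∧ IsCoprime u m := by
  obtain ⟨u, v, huv⟩ := h
  exact ⟨u, Int.modEq_iff_dvd.2 ⟨v, by linarith⟩, ⟨c, v, by linarith⟩⟩

lemma AddSubgroup.zmultiples_prod_zmultiples {G H : Type*} [AddGroup G] [AddGroup H] (g : G)
    (h : H) :
    (zmultiples g).prod (zmultiples h) = closure {((g, 0) : G × H), (0, h)} := by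
  apply le_antisymm
  · rintro ⟨x, y⟩ hxy
    obtain ⟨⟨m, rfl⟩, ⟨n, rfl⟩⟩ := mem_prod.1 hxy
    have hsplit : ((m • g, n • h) : G × H) = m • ((g, 0) : G × H) + n • (0, h) := by simp
    rw [hsplit]
    exact add_mem (zsmul_mem (subset_closure (by simp)) m) (zsmul_mem (subset_closure (by simp)) n)
  · rw [closure_le, Set.insert_subset_iff, Set.singleton_subset_iff]
    exact ⟨mem_prod.2 ⟨mem_zmultiples g, zero_mem _⟩, mem_prod.2 ⟨zero_mem _, mem_zmultiples h⟩⟩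

namespace CuspCount

section Line

variable {N N' : ℕ} {a c a' c' n : ℤ}

/-- Note the order of the arguments: `line N N' c a` is generated by `(c, a)`, as in `H¹_{a,c}`. -/
def line (N N' : ℕ) (c a : ℤ) : AddSubgroup (ZMod N × ZMod N') :=
  zmultiples ((c : ZMod N), (a : ZMod N'))

lemma mem_line_iff {v : ZMod N × ZMod N'} :
    v ∈ line N N' c a ↔ ∃ n : ℤ, ((n * c : ℤ) : ZMod N) = v.1 ∧ ((n * a : ℤ) : ZMod N') = v.2 := by
  simp [line, mem_zmultiples_iff, Prod.ext_iff]

lemma intCast_mem_line_iff :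
    ((c' : ZMod N), (a' : ZMod N')) ∈ line N N' c a ↔
      ∃ n : ℤ, n * c ≡ c' [ZMOD N] ∧ n * a ≡ a' [ZMOD N'] := by
  simp only [mem_line_iff, ZMod.intCast_eq_intCast_iff]

lemma line_le_iff : line N N' c a ≤ line N N' c' a' ↔
    ∃ n : ℤ, n * c' ≡ c [ZMOD N] ∧ n * a' ≡ a [ZMOD N'] := by
  rw [show line N N' c a = zmultiples _ from rfl, zmultiples_le, intCast_mem_line_iff]

lemma line_eq_of_modEq (hN : N' ∣ N) (hn : IsCoprime n N) (hc : n * c ≡ c' [ZMOD N])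
    (ha : n * a ≡ a' [ZMOD N']) : line N N' c a = line N N' c' a' := by
  obtain ⟨u, hu, -⟩ := Int.exists_mul_modEq_one_of_isCoprime hn
  refine le_antisymm (line_le_iff.2 ⟨u, ?_, ?_⟩) (line_le_iff.2 ⟨n, hc, ha⟩)
  · calc u * c' ≡ u * (n * c) [ZMOD N] := (hc.mul_left u).symm
      _ = u * n * c := by ring
      _ ≡ 1 * c [ZMOD N] := hu.mul_right c
      _ = c := one_mul c
  · calc u * a' ≡ u * (n * a) [ZMOD N'] := (ha.mul_left u).symm
      _ = u * n * a := by ring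
      _ ≡ 1 * a [ZMOD N'] := (hu.of_dvd (Int.natCast_dvd_natCast.2 hN)).mul_right a
      _ = a := one_mul a

lemma line_congr (hc : (c : ZMod N) = c') (ha : (a : ZMod N') = a') :
    line N N' c a = line N N' c' a' := by
  simp only [line, hc, ha]

lemma modEq_of_line_one_eq {t t' : ℤ} (hN : N' ∣ N) (h : line N N' 1 t = line N N' 1 t') :
    t ≡ t' [ZMOD N'] := by
  obtain ⟨n, hn, hnt⟩ := line_le_iff.1 h.ge
  have hn1 : n ≡ 1 [ZMOD N'] := by simpa using hn.of_dvd (Int.natCast_dvd_natCast.2 hN)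
  calc t = 1 * t := (one_mul t).symm
    _ ≡ n * t [ZMOD N'] := (hn1.mul_right t).symm
    _ ≡ t' [ZMOD N'] := hnt

lemma line_neg : line N N' (-c) (-a) = line N N' c a := by
  simp [line, ← Prod.neg_mk, zmultiples_neg]

lemma mem_line_of_dvd_left (hc : (N : ℤ) ∣ c) (ha : IsCoprime a N') {v : ZMod N × ZMod N'} :
    v ∈ line N N' c a ↔ v.1 = 0 := by
  obtain ⟨u, hu, -⟩ := Int.exists_mul_modEq_one_of_isCoprime ha
  obtain ⟨x, y⟩ := v
  obtain ⟨x, rfl⟩ := ZMod.intCast_surjective x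
  obtain ⟨y, rfl⟩ := ZMod.intCast_surjective y
  rw [intCast_mem_line_iff, ZMod.intCast_zmod_eq_zero_iff_dvd]
  constructor
  · rintro ⟨n, hn, -⟩
    exact (Int.ModEq.dvd_iff hn).1 (dvd_mul_of_dvd_right hc n)
  · intro hx
    refine ⟨y * u, ?_, ?_⟩
    · exact (Int.modEq_zero_iff_dvd.2 (dvd_mul_of_dvd_right hc _)).trans
        (Int.modEq_zero_iff_dvd.2 hx).symm
    · simpa [mul_assoc] using hu.mul_left y

lemma mem_line_of_dvd_right (ha : (N' : ℤ) ∣ a) (hc : IsCoprime c N) {v : ZMod N × ZMod N'} :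
    v ∈ line N N' c a ↔ v.2 = 0 := by
  obtain ⟨u, hu, -⟩ := Int.exists_mul_modEq_one_of_isCoprime hc
  obtain ⟨x, y⟩ := v
  obtain ⟨x, rfl⟩ := ZMod.intCast_surjective x
  obtain ⟨y, rfl⟩ := ZMod.intCast_surjective y
  rw [intCast_mem_line_iff, ZMod.intCast_zmod_eq_zero_iff_dvd]
  constructor
  · rintro ⟨n, -, hn⟩
    exact (Int.ModEq.dvd_iff hn).1 (dvd_mul_of_dvd_right ha n)
  · intro hy
    refine ⟨x * u, ?_, ?_⟩
    · simpa [mul_assoc] using hu.mul_left x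
    · exact (Int.modEq_zero_iff_dvd.2 (dvd_mul_of_dvd_right ha _)).trans
        (Int.modEq_zero_iff_dvd.2 hy).symm

end Line

section Mgcd

variable {N N' : ℕ} {a c a' c' m n : ℤ}

lemma Mgcd_dvd (N N' : ℕ) (c : ℤ) : Mgcd N N' c ∣ c :=
  Int.natCast_dvd.2 (Nat.gcd_dvd_right _ _)

lemma mul_Mgcd_dvd (hN : N' ∣ N) (c : ℤ) : (N' : ℤ) * Mgcd N N' c ∣ N := by
  have hdiv : (N : ℤ) = N' * ((N / N' : ℕ) : ℤ) := by exact_mod_cast (Nat.mul_div_cancel' hN).symm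
  rw [hdiv]
  exact mul_dvd_mul_left _ (Int.natCast_dvd_natCast.2 (Nat.gcd_dvd_left _ _))

lemma Mgcd_eq_one (hN : N' ∣ N) (hc : IsCoprime c N) : Mgcd N N' c = 1 := by
  have hcop : Nat.Coprime c.natAbs N := Int.isCoprime_iff_gcd_eq_one.1 hc
  rw [Mgcd, (hcop.symm.coprime_dvd_left (Nat.div_dvd_of_dvd hN)).gcd_eq_one, Nat.cast_one]

lemma Mgcd_of_dvd (hc : ((N / N' : ℕ) : ℤ) ∣ c) : Mgcd N N' c = (N / N' : ℕ) := by
  rw [Mgcd, Nat.gcd_eq_left (Int.natCast_dvd.1 hc)]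

lemma Mgcd_congr (hN : N' ∣ N) (hn : IsCoprime n N) (h : n * c ≡ c' [ZMOD N]) :
    Mgcd N N' c' = Mgcd N N' c := by
  obtain ⟨t, ht⟩ := (h.of_dvd (Int.natCast_dvd_natCast.2 (Nat.div_dvd_of_dvd hN))).dvd
  have hcop : Int.gcd ((N / N' : ℕ) : ℤ) n = 1 :=
    Int.isCoprime_iff_gcd_eq_one.1 (hn.symm.of_isCoprime_of_dvd_left
      (Int.natCast_dvd_natCast.2 (Nat.div_dvd_of_dvd hN)))
  change ((Int.gcd ((N / N' : ℕ) : ℤ) c' : ℕ) : ℤ) = Int.gcd ((N / N' : ℕ) : ℤ) c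
  rw [show c' = c * n + ((N / N' : ℕ) : ℤ) * t by linarith, Int.gcd_add_mul_left_right,
    Int.gcd_mul_left_right_of_gcd_eq_one hcop]

def firstLine (N N' : ℕ) (a c : ℤ) : AddSubgroup (ZMod N × ZMod N') :=
  line N N' ((N : ℤ) / ((N' : ℤ) * Mgcd N N' c) * a) (-(c / Mgcd N N' c))

lemma firstLine_eq [NeZero N] (hN : N' ∣ N) (hM : Mgcd N N' c' = Mgcd N N' c)
    (hm : IsCoprime m N) (hc : m * c ≡ c' [ZMOD N' * Mgcd N N' c])
    (ha : m * a ≡ a' [ZMOD N' * Mgcd N N' c]) :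
    firstLine N N' a c = firstLine N N' a' c' := by
  rw [firstLine, firstLine, hM]
  obtain ⟨K, hK⟩ := mul_Mgcd_dvd hN c
  have hN'M : (N' : ℤ) * Mgcd N N' c ≠ 0 := by
    have hN0 : (N : ℤ) ≠ 0 := by exact_mod_cast NeZero.ne N
    rw [hK] at hN0
    exact left_ne_zero_of_mul hN0
  have hM0 : Mgcd N N' c ≠ 0 := right_ne_zero_of_mul hN'M
  obtain ⟨c₁, hc₁⟩ := Mgcd_dvd N N' c
  obtain ⟨c₁', hc₁'⟩ := hM ▸ Mgcd_dvd N N' c'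
  generalize Mgcd N N' c = M at *
  subst hc₁ hc₁'
  rw [hK, Int.mul_ediv_cancel_left _ hN'M, Int.mul_ediv_cancel_left _ hM0,
    Int.mul_ediv_cancel_left _ hM0]
  refine line_eq_of_modEq hN hm ?_ ?_
  · rw [hK, show (N' : ℤ) * M * K = K * (N' * M) by ring,
      show m * (K * a) = K * (m * a) by ring]
    exact ha.mul_left'
  · rw [show m * (M * c₁) = m * c₁ * M by ring, show M * c₁' = c₁' * M by ring] at hc
    rw [mul_neg]
    exact (Int.ModEq.mul_right_cancel' hM0 hc).neg

end Mgcd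

section Structure

variable (N N' : ℕ) (a c : ℤ)

def swapYZ : Dty N N' ≃+ Dty N N' := (AddEquiv.refl _).prodCongr AddEquiv.prodComm

lemma H1_eq_map : H1 N N' a c = ((firstLine N N' a c).prod (line N N' c a)).map
    ((AddEquiv.prodProdProdComm _ _ _ _).trans (swapYZ N N')).toAddMonoidHom := by
  rw [firstLine, line, line, zmultiples_prod_zmultiples, AddMonoidHom.map_closure,
    Set.image_insert_eq, Set.image_singleton]
  rfl

lemma H2_eq_map : H2 N N' a c =
    ((line N N' ((N : ℤ) / ((N' : ℤ) * Mgcd N N' c) * a) (c / Mgcd N N' c)).prod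
      (line N N' c (-a))).map (AddEquiv.prodProdProdComm _ _ _ _).toAddMonoidHom := by
  rw [line, line, zmultiples_prod_zmultiples, AddMonoidHom.map_closure,
    Set.image_insert_eq, Set.image_singleton]
  rfl

variable {N N' a c}

lemma mem_H1 {v : Dty N N'} :
    v ∈ H1 N N' a c ↔ (v.1.1, v.2.2) ∈ firstLine N N' a c ∧ (v.1.2, v.2.1) ∈ line N N' c a := by
  rw [H1_eq_map, mem_map_equiv, mem_prod]
  rfl

lemma mem_H2 {v : Dty N N'} :
    v ∈ H2 N N' a c ↔
      (v.1.1, v.2.1) ∈ firstLine N N' (-a) c ∧ (v.1.2, v.2.2) ∈ line N N' c (-a) := by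
  rw [H2_eq_map, mem_map_equiv, mem_prod, firstLine, mul_neg, line_neg]
  rfl

lemma map_swapYZ_H1 : (H1 N N' a c).map (swapYZ N N').toAddMonoidHom = H2 N N' (-a) c := by
  ext v
  rw [mem_map_equiv, mem_H1, mem_H2, neg_neg]
  rfl

lemma map_swapYZ_H2 : (H2 N N' a c).map (swapYZ N N').toAddMonoidHom = H1 N N' (-a) c := by
  ext v
  rw [mem_map_equiv, mem_H1, mem_H2]
  rfl

lemma mem_H1_of_dvd_left (hN : N' ∣ N) (hc : IsCoprime c N) (ha : (N' : ℤ) ∣ a)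
    {v : Dty N N'} : v ∈ H1 N N' a c ↔ v.1.1 = 0 ∧ v.2.1 = 0 := by
  have hN' : (N' : ℤ) ∣ N := Int.natCast_dvd_natCast.2 hN
  obtain ⟨a₁, rfl⟩ := ha
  rw [mem_H1, firstLine, Mgcd_eq_one hN hc, mul_one, Int.ediv_one,
    mem_line_of_dvd_left ⟨a₁, by rw [← mul_assoc, Int.ediv_mul_cancel hN']⟩
      (hc.of_isCoprime_of_dvd_right hN').neg_left,
    mem_line_of_dvd_right ⟨a₁, rfl⟩ hc]

lemma mem_H1_of_dvd_right [NeZero N] (hN : N' ∣ N) (hc : (N : ℤ) ∣ c) (ha : IsCoprime a N)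
    {v : Dty N N'} : v ∈ H1 N N' a c ↔ v.2.2 = 0 ∧ v.1.2 = 0 := by
  have hN' : (N' : ℤ) ∣ N := Int.natCast_dvd_natCast.2 hN
  have hNN : (N : ℤ) = N' * ((N / N' : ℕ) : ℤ) := by
    exact_mod_cast (Nat.mul_div_cancel' hN).symm
  have hM : Mgcd N N' c = (N / N' : ℕ) :=
    Mgcd_of_dvd ((Int.natCast_dvd_natCast.2 (Nat.div_dvd_of_dvd hN)).trans hc)
  have hK0 : ((N / N' : ℕ) : ℤ) ≠ 0 := by
    have hN0 : (N : ℤ) ≠ 0 := by exact_mod_cast NeZero.ne N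
    rw [hNN] at hN0
    exact right_ne_zero_of_mul hN0
  obtain ⟨t, rfl⟩ := hc
  have hdiv : (N : ℤ) * t / ((N / N' : ℕ) : ℤ) = N' * t := by
    rw [hNN, mul_comm (N' : ℤ), mul_assoc, Int.mul_ediv_cancel_left _ hK0]
  rw [mem_H1, firstLine, hM, ← hNN, Int.ediv_self (by exact_mod_cast NeZero.ne N), one_mul, hdiv,
    mem_line_of_dvd_right (dvd_neg.2 (dvd_mul_right _ _)) ha,
    mem_line_of_dvd_left (dvd_mul_right _ _) (ha.of_isCoprime_of_dvd_right hN')]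

lemma mem_H2_iff_mem_H1 {v : Dty N N'} :
    v ∈ H2 N N' a c ↔ (v.1, (v.2.2, v.2.1)) ∈ H1 N N' (-a) c := by
  rw [← neg_neg a, ← map_swapYZ_H1, neg_neg, mem_map_equiv]
  rfl

lemma line_eq_of_H1_eq {a' c' : ℤ} (h : H1 N N' a c = H1 N N' a' c') :
    line N N' c a = line N N' c' a' := by
  have key : ∀ {a c a' c' : ℤ}, H1 N N' a c = H1 N N' a' c' → line N N' c a ≤ line N N' c' a' := by
    intro a c a' c' h
    have hv : (((0 : ZMod N), (c : ZMod N)), ((a : ZMod N'), (0 : ZMod N'))) ∈ H1 N N' a c :=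
      mem_H1.2 ⟨zero_mem _, mem_zmultiples _⟩
    exact zmultiples_le.2 (mem_H1.1 (h ▸ hv)).2
  exact le_antisymm (key h) (key h.symm)

end Structure

section PrimePower

variable {p r r' : ℕ} {a c a' c' n : ℤ}

lemma prime_dvd_pow {k : ℕ} (hk : k ≠ 0) : (p : ℤ) ∣ ((p ^ k : ℕ) : ℤ) := by
  rw [Nat.cast_pow]
  exact dvd_pow_self _ hk

lemma isCoprime_pow_of_not_dvd (hp : p.Prime) (h : ¬ (p : ℤ) ∣ a) (k : ℕ) :
    IsCoprime a ((p ^ k : ℕ) : ℤ) := by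
  rw [Nat.cast_pow]
  exact (Nat.prime_iff_prime_int.mp hp).irreducible.coprime_pow_of_not_dvd k h

lemma not_dvd_of_modEq_one (hp : p.Prime) (hr' : r' ≠ 0) (h : n ≡ 1 [ZMOD ((p ^ r' : ℕ) : ℤ)]) :
    ¬ (p : ℤ) ∣ n := fun hn =>
  (Nat.prime_iff_prime_int.mp hp).not_dvd_one (((h.of_dvd (prime_dvd_pow hr')).dvd_iff).1 hn)

lemma not_dvd_of_isCoprime (hp : p.Prime) (hac : IsCoprime a c) (ha : (p : ℤ) ∣ a) :
    ¬ (p : ℤ) ∣ c := fun hc =>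
  (Nat.prime_iff_prime_int.mp hp).not_isUnit (hac.isUnit_of_dvd' ha hc)

lemma isCoprime_pow_of_isCoprime (hp : p.Prime) (hac : IsCoprime a c) (ha : (p : ℤ) ∣ a)
    (k : ℕ) : IsCoprime c ((p ^ k : ℕ) : ℤ) :=
  isCoprime_pow_of_not_dvd hp (not_dvd_of_isCoprime hp hac ha) k

/-- If `p ∣ a` then `M = 1` and `m = n` works; otherwise `m = a' a⁻¹` works, since it agrees with
`n` modulo `p ^ r'` and `M ∣ c`. -/
lemma exists_isCoprime_modEq_mul_Mgcd (hp : p.Prime) (hr' : r' ≠ 0) (hrr : r' ≤ r)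
    (hac : IsCoprime a c) (hn : ¬ (p : ℤ) ∣ n) (hnc : n * c ≡ c' [ZMOD (p ^ r : ℕ)])
    (hna : n * a ≡ a' [ZMOD (p ^ r' : ℕ)]) :
    ∃ m : ℤ, IsCoprime m ((p ^ r : ℕ) : ℤ) ∧
      m * c ≡ c' [ZMOD (p ^ r' : ℕ) * Mgcd (p ^ r) (p ^ r') c] ∧
      m * a ≡ a' [ZMOD (p ^ r' : ℕ) * Mgcd (p ^ r) (p ^ r') c] := by
  have hN : p ^ r' ∣ p ^ r := pow_dvd_pow p hrr
  have hN' : ((p ^ r' : ℕ) : ℤ) ∣ ((p ^ r : ℕ) : ℤ) := Int.natCast_dvd_natCast.2 hN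
  by_cases hpa : (p : ℤ) ∣ a
  · rw [Mgcd_eq_one hN (isCoprime_pow_of_isCoprime hp hac hpa r), mul_one]
    exact ⟨n, isCoprime_pow_of_not_dvd hp hn r, hnc.of_dvd hN', hna⟩
  obtain ⟨u, hu, huN⟩ :=
    Int.exists_mul_modEq_one_of_isCoprime (isCoprime_pow_of_not_dvd hp hpa r)
  have hpa' : ¬ (p : ℤ) ∣ a' := fun hpa' =>
    ((Nat.prime_iff_prime_int.mp hp).dvd_mul.1
      (((hna.of_dvd (prime_dvd_pow hr')).dvd_iff).2 hpa')).elim hn hpa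
  have hNM := mul_Mgcd_dvd hN c
  obtain ⟨c₁, hc₁⟩ := Mgcd_dvd (p ^ r) (p ^ r') c
  have hu' : a' * u ≡ n [ZMOD (p ^ r' : ℕ)] :=
    calc a' * u ≡ n * a * u [ZMOD (p ^ r' : ℕ)] := (hna.mul_right u).symm
      _ = n * (u * a) := by ring
      _ ≡ n * 1 [ZMOD (p ^ r' : ℕ)] := (hu.of_dvd hN').mul_left n
      _ = n := mul_one n
  refine ⟨a' * u, (isCoprime_pow_of_not_dvd hp hpa' r).mul_left huN, ?_, ?_⟩
  · calc a' * u * c = a' * u * Mgcd (p ^ r) (p ^ r') c * c₁ := by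
          rw [mul_assoc (a' * u), ← hc₁]
      _ ≡ n * Mgcd (p ^ r) (p ^ r') c * c₁ [ZMOD (p ^ r' : ℕ) * Mgcd (p ^ r) (p ^ r') c] :=
        (hu'.mul_right' (c := Mgcd (p ^ r) (p ^ r') c)).mul_right c₁
      _ = n * c := by rw [mul_assoc n, ← hc₁]
      _ ≡ c' [ZMOD (p ^ r' : ℕ) * Mgcd (p ^ r) (p ^ r') c] := hnc.of_dvd hNM
  · calc a' * u * a = a' * (u * a) := by ring
      _ ≡ a' * 1 [ZMOD (p ^ r' : ℕ) * Mgcd (p ^ r) (p ^ r') c] := (hu.of_dvd hNM).mul_left a'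
      _ = a' := mul_one a'

theorem H1_eq_H1_iff (hp : p.Prime) (hr' : r' ≠ 0) (hrr : r' ≤ r) (hac : IsCoprime a c)
    (hac' : IsCoprime a' c') :
    H1 (p ^ r) (p ^ r') a c = H1 (p ^ r) (p ^ r') a' c' ↔
      line (p ^ r) (p ^ r') c a = line (p ^ r) (p ^ r') c' a' := by
  refine ⟨line_eq_of_H1_eq, fun h => ?_⟩
  have : NeZero (p ^ r) := ⟨pow_ne_zero r hp.ne_zero⟩
  have hN : p ^ r' ∣ p ^ r := pow_dvd_pow p hrr
  have hpN' : (p : ℤ) ∣ ((p ^ r' : ℕ) : ℤ) := prime_dvd_pow hr'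
  obtain ⟨n, hnc, hna⟩ := line_le_iff.1 h.ge
  have hn : ¬ (p : ℤ) ∣ n := fun hn =>
    not_dvd_of_isCoprime hp hac'.symm
      (((hnc.of_dvd (hpN'.trans (Int.natCast_dvd_natCast.2 hN))).dvd_iff).1
        (dvd_mul_of_dvd_left hn c))
      (((hna.of_dvd hpN').dvd_iff).1 (dvd_mul_of_dvd_left hn a))
  obtain ⟨m, hm, hmc, hma⟩ := exists_isCoprime_modEq_mul_Mgcd hp hr' hrr hac hn hnc hna
  ext v
  rw [mem_H1, mem_H1, h,
    firstLine_eq hN (Mgcd_congr hN (isCoprime_pow_of_not_dvd hp hn r) hnc) hm hmc hma]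

lemma dvd_or_dvd_of_mem_line (hp : p.Prime) (hr' : r' ≠ 0) (hrr : r' ≤ r) (hac : IsCoprime a c)
    (hc : ((c : ZMod (p ^ r)), (0 : ZMod (p ^ r'))) ∈ line (p ^ r) (p ^ r') c a)
    (ha : ((0 : ZMod (p ^ r)), (a : ZMod (p ^ r'))) ∈ line (p ^ r) (p ^ r') c a) :
    ((p ^ r' : ℕ) : ℤ) ∣ a ∨ ((p ^ r : ℕ) : ℤ) ∣ c := by
  have hN' : ((p ^ r' : ℕ) : ℤ) ∣ ((p ^ r : ℕ) : ℤ) := Int.natCast_dvd_natCast.2 (pow_dvd_pow p hrr)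
  rw [mem_line_iff] at hc ha
  obtain ⟨n, hnc, hna⟩ := hc
  obtain ⟨m, hmc, hma⟩ := ha
  simp only [ZMod.intCast_eq_intCast_iff, ZMod.intCast_zmod_eq_zero_iff_dvd] at hnc hna hmc hma
  by_cases hpc : (p : ℤ) ∣ c
  · have hm : m ≡ 1 [ZMOD (p ^ r' : ℕ)] :=
      Int.ModEq.cancel_right_of_isCoprime (isCoprime_pow_of_isCoprime hp hac.symm hpc r')
        (by rwa [one_mul])
    have hmN := isCoprime_pow_of_not_dvd hp (not_dvd_of_modEq_one hp hr' hm) r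
    exact Or.inr (hmN.symm.dvd_of_dvd_mul_left hmc)
  · have hn : n ≡ 1 [ZMOD (p ^ r : ℕ)] :=
      Int.ModEq.cancel_right_of_isCoprime (isCoprime_pow_of_not_dvd hp hpc r) (by rwa [one_mul])
    exact Or.inl (by simpa using ((hn.of_dvd hN').mul_right a).dvd_iff.1 hna)

lemma dvd_or_dvd_of_H1_eq_H2 (hp : p.Prime) (hr' : r' ≠ 0) (hrr : r' ≤ r) (hac : IsCoprime a c)
    (h : H1 (p ^ r) (p ^ r') a c = H2 (p ^ r) (p ^ r') a' c') :
    ((p ^ r' : ℕ) : ℤ) ∣ a ∨ ((p ^ r : ℕ) : ℤ) ∣ c := by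
  have e : ∀ v, v ∈ H1 (p ^ r) (p ^ r') a c ↔ v ∈ H2 (p ^ r) (p ^ r') a' c' := fun v => by rw [h]
  have h₀ := mem_H2.1 ((e (((0 : ZMod (p ^ r)), (c : ZMod (p ^ r))),
    ((a : ZMod (p ^ r')), (0 : ZMod (p ^ r'))))).1 (mem_H1.2 ⟨zero_mem _, mem_zmultiples _⟩))
  refine dvd_or_dvd_of_mem_line hp hr' hrr hac ?_ ?_
  · exact (mem_H1.1 ((e (((0 : ZMod (p ^ r)), (c : ZMod (p ^ r))),
      ((0 : ZMod (p ^ r')), (0 : ZMod (p ^ r'))))).2 (mem_H2.2 ⟨zero_mem _, h₀.2⟩))).2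
  · exact (mem_H1.1 ((e (((0 : ZMod (p ^ r)), (0 : ZMod (p ^ r))),
      ((a : ZMod (p ^ r')), (0 : ZMod (p ^ r'))))).2 (mem_H2.2 ⟨h₀.1, zero_mem _⟩))).2

lemma mem_H1_iff_of_H1_eq_H2 (hp : p.Prime) (hr' : r' ≠ 0) (hrr : r' ≤ r) (hac : IsCoprime a c)
    (h : H1 (p ^ r) (p ^ r') a c = H2 (p ^ r) (p ^ r') a' c') :
    (∀ v, v ∈ H1 (p ^ r) (p ^ r') a c ↔ v.1.1 = 0 ∧ v.2.1 = 0) ∨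
      (∀ v, v ∈ H1 (p ^ r) (p ^ r') a c ↔ v.2.2 = 0 ∧ v.1.2 = 0) := by
  have : NeZero (p ^ r) := ⟨pow_ne_zero r hp.ne_zero⟩
  have hN := pow_dvd_pow p hrr
  rcases dvd_or_dvd_of_H1_eq_H2 hp hr' hrr hac h with ha | hc
  · exact Or.inl fun v => mem_H1_of_dvd_left hN
      (isCoprime_pow_of_isCoprime hp hac ((prime_dvd_pow hr').trans ha) r) ha
  · exact Or.inr fun v => mem_H1_of_dvd_right hN hc
      (isCoprime_pow_of_isCoprime hp hac.symm ((prime_dvd_pow (k := r) (by omega)).trans hc) r)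

theorem H1_ne_H2 (hp : p.Prime) (hr' : r' ≠ 0) (hrr : r' ≤ r) (hac : IsCoprime a c)
    (hac' : IsCoprime a' c') : H1 (p ^ r) (p ^ r') a c ≠ H2 (p ^ r) (p ^ r') a' c' := by
  intro h
  have h' : H1 (p ^ r) (p ^ r') (-a') c' = H2 (p ^ r) (p ^ r') (-a) c := by
    rw [← map_swapYZ_H2, ← h, map_swapYZ_H1]
  have : Fact (1 < p ^ r) := ⟨Nat.one_lt_pow (by omega) hp.one_lt⟩
  have : Fact (1 < p ^ r') := ⟨Nat.one_lt_pow hr' hp.one_lt⟩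
  have hw := SetLike.ext_iff.1 h ((1, 0), (0, 0))
  have hz := SetLike.ext_iff.1 h ((0, 0), (0, 1))
  rw [mem_H2_iff_mem_H1] at hw hz
  rcases mem_H1_iff_of_H1_eq_H2 hp hr' hrr hac h with h₁ | h₁ <;>
    rcases mem_H1_iff_of_H1_eq_H2 hp hr' hrr hac'.neg_left h' with h₂ | h₂ <;>
    simp [h₁, h₂] at hw hz

lemma exists_line_eq_line_one (hp : p.Prime) (hrr : r' ≤ r) (hc : ¬ (p : ℤ) ∣ c) :
    ∃ t < p ^ r', line (p ^ r) (p ^ r') c a = line (p ^ r) (p ^ r') 1 t := by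
  have : NeZero (p ^ r') := ⟨pow_ne_zero r' hp.ne_zero⟩
  obtain ⟨u, hu, huN⟩ := Int.exists_mul_modEq_one_of_isCoprime (isCoprime_pow_of_not_dvd hp hc r)
  refine ⟨((u * a : ℤ) : ZMod (p ^ r')).val, ZMod.val_lt _, ?_⟩
  rw [line_eq_of_modEq (pow_dvd_pow p hrr) huN hu (Int.ModEq.refl (u * a))]
  exact line_congr rfl (by simp)

lemma line_pow_mul_eq_mod (hp : p.Prime) (hr' : r' ≠ 0) (hrr : r' ≤ r) {d : ℕ} (hd : ¬ p ∣ d)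
    (k : ℕ) : line (p ^ r) (p ^ r') ((p : ℤ) ^ k * d) 1 =
      line (p ^ r) (p ^ r') ((p : ℤ) ^ k * (d % p ^ r' : ℕ)) 1 := by
  have hdN' : ((d % p ^ r' : ℕ) : ℤ) ≡ d [ZMOD (p ^ r' : ℕ)] := by
    rw [Int.natCast_mod]
    exact Int.mod_modEq _ _
  have hd' : ¬ (p : ℤ) ∣ (d % p ^ r' : ℕ) := by
    rw [Int.natCast_dvd_natCast, Nat.dvd_mod_iff (dvd_pow_self p hr')]
    exact hd
  obtain ⟨u, hu, huN⟩ := Int.exists_mul_modEq_one_of_isCoprime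
    (isCoprime_pow_of_not_dvd hp (a := d) (by exact_mod_cast hd) r)
  refine line_eq_of_modEq (pow_dvd_pow p hrr) ((isCoprime_pow_of_not_dvd hp hd' r).mul_left huN)
    ?_ ?_
  · calc (d % p ^ r' : ℕ) * u * ((p : ℤ) ^ k * d) = (p : ℤ) ^ k * (d % p ^ r' : ℕ) * (u * d) := by
          ring
      _ ≡ (p : ℤ) ^ k * (d % p ^ r' : ℕ) * 1 [ZMOD (p ^ r : ℕ)] := hu.mul_left _
      _ = (p : ℤ) ^ k * (d % p ^ r' : ℕ) := mul_one _
  · calc (d % p ^ r' : ℕ) * u * 1 = (d % p ^ r' : ℕ) * u := mul_one _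
      _ ≡ d * u [ZMOD (p ^ r' : ℕ)] := hdN'.mul_right u
      _ = u * d := mul_comm _ _
      _ ≡ 1 [ZMOD (p ^ r' : ℕ)] := hu.of_dvd (Int.natCast_dvd_natCast.2 (pow_dvd_pow p hrr))

lemma line_one_ne_line (hp : p.Prime) (hr' : r' ≠ 0) (hrr : r' ≤ r) {t x : ℤ} (hx : (p : ℤ) ∣ x) :
    line (p ^ r) (p ^ r') 1 t ≠ line (p ^ r) (p ^ r') x 1 := by
  intro h
  obtain ⟨n, hn, hnt⟩ := line_le_iff.1 h.ge
  have hpn : (p : ℤ) ∣ n := by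
    simpa using ((hn.of_dvd (prime_dvd_pow (k := r) (by omega))).dvd_iff).2 hx
  exact (Nat.prime_iff_prime_int.mp hp).not_dvd_one
    (((hnt.of_dvd (prime_dvd_pow hr')).dvd_iff).1 (dvd_mul_of_dvd_left hpn t))

lemma le_of_line_pow_eq (hp : p.Prime) (hr' : r' ≠ 0) {k k' : ℕ} {u u' : ℤ} (hu : ¬ (p : ℤ) ∣ u)
    (hk' : k' ≤ r) (h : line (p ^ r) (p ^ r') ((p : ℤ) ^ k * u) 1 =
      line (p ^ r) (p ^ r') ((p : ℤ) ^ k' * u') 1) : k' ≤ k := by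
  by_contra! hlt
  obtain ⟨n, hn, hn1⟩ := line_le_iff.1 h.ge
  rw [mul_one] at hn1
  have hpn := not_dvd_of_modEq_one hp hr' hn1
  have hdvd : (p : ℤ) ^ k * p ∣ (p : ℤ) ^ k * (n * u) := by
    rw [← pow_succ, show (p : ℤ) ^ k * (n * u) = n * ((p : ℤ) ^ k * u) by ring]
    refine ((hn.of_dvd ?_).dvd_iff).2 (dvd_mul_of_dvd_left (pow_dvd_pow _ hlt) u')
    rw [Nat.cast_pow]
    exact pow_dvd_pow _ (by omega)
  have hp' := Nat.prime_iff_prime_int.mp hp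
  rcases hp'.dvd_mul.1 ((mul_dvd_mul_iff_left (pow_ne_zero k hp'.ne_zero)).1 hdvd) with h' | h'
  · exact hpn h'
  · exact hu h'

lemma modEq_of_line_pow_eq (hp : p.Prime) {k : ℕ} {u u' : ℤ} (hk : k ≤ r)
    (h : line (p ^ r) (p ^ r') ((p : ℤ) ^ k * u) 1 = line (p ^ r) (p ^ r') ((p : ℤ) ^ k * u') 1) :
    u ≡ u' [ZMOD (p : ℤ) ^ min r' (r - k)] := by
  obtain ⟨n, hn, hn1⟩ := line_le_iff.1 h.ge
  have hnu : n * u ≡ u' [ZMOD (p : ℤ) ^ (r - k)] := by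
    refine Int.ModEq.mul_left_cancel' (pow_ne_zero k (Nat.cast_ne_zero.2 hp.ne_zero)) ?_
    rw [← pow_add, Nat.add_sub_cancel' hk, ← Nat.cast_pow, mul_left_comm]
    exact hn
  have hn1' : n ≡ 1 [ZMOD (p : ℤ) ^ r'] := by simpa using hn1
  calc u = 1 * u := (one_mul u).symm
    _ ≡ n * u [ZMOD (p : ℤ) ^ min r' (r - k)] :=
      ((hn1'.of_dvd (pow_dvd_pow _ (min_le_left _ _))).mul_right u).symm
    _ ≡ u' [ZMOD (p : ℤ) ^ min r' (r - k)] := hnu.of_dvd (pow_dvd_pow _ (min_le_right _ _))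

end PrimePower

section Representatives

open Finset

variable (p r r' : ℕ)

def repIndex : Finset (ℕ × ℕ) :=
  ({0} ×ˢ range (p ^ r')) ∪ (Icc 1 (r - r') ×ˢ (range (p ^ r')).filter (fun u => ¬ p ∣ u)) ∪
    ({r - r' + 1} ×ˢ range (p ^ (r' - 1)))

/-- The pair `(a, c)` of the canonical `H¹_{a,c}` indexed by `i`. -/
def rep (i : ℕ × ℕ) : ℤ × ℤ := if i.1 = 0 then (i.2, 1) else (1, (p : ℤ) ^ i.1 * i.2)

variable {p r r'}

lemma mem_repIndex {k u : ℕ} : (k, u) ∈ repIndex p r r' ↔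
    (k = 0 ∧ u < p ^ r') ∨ (1 ≤ k ∧ k ≤ r - r' ∧ u < p ^ r' ∧ ¬ p ∣ u) ∨
      (k = r - r' + 1 ∧ u < p ^ (r' - 1)) := by
  simp only [repIndex, mem_union, mem_product, mem_singleton, mem_range, mem_Icc, mem_filter]
  tauto

lemma card_repIndex (hp : p.Prime) (hr' : r' ≠ 0) :
    (repIndex p r r').card = p ^ r' + (r - r') * (p ^ r').totient + p ^ (r' - 1) := by
  have hfilter : (range (p ^ r')).filter (fun u => ¬ p ∣ u) =
      (range (p ^ r')).filter (p ^ r').Coprime := by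
    refine filter_congr fun u _ => ?_
    rw [Nat.coprime_pow_left_iff (Nat.pos_of_ne_zero hr'), Nat.Prime.coprime_iff_not_dvd hp]
  rw [repIndex, card_union_of_disjoint, card_union_of_disjoint, card_product, card_product,
    card_product, hfilter, ← Nat.totient_eq_card_coprime]
  · simp
  all_goals
    rw [disjoint_left]
    rintro ⟨k, u⟩
    simp only [mem_union, mem_product, mem_singleton, mem_Icc]
    omega

lemma exists_mem_repIndex_of_dvd (hp : p.Prime) (hr' : r' ≠ 0) (hrr : r' ≤ r) {x : ℕ}
    (hx : x < p ^ r) (hpx : p ∣ x) : ∃ i ∈ repIndex p r r', i.1 ≠ 0 ∧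
      line (p ^ r) (p ^ r') x 1 = line (p ^ r) (p ^ r') ((p : ℤ) ^ i.1 * i.2) 1 := by
  by_cases hC : p ^ (r - r' + 1) ∣ x
  · obtain ⟨w, rfl⟩ := hC
    have hw : w < p ^ (r' - 1) := by
      rw [show p ^ r = p ^ (r - r' + 1) * p ^ (r' - 1) by rw [← pow_add]; congr 1; omega] at hx
      exact Nat.lt_of_mul_lt_mul_left hx
    exact ⟨(r - r' + 1, w), mem_repIndex.2 (Or.inr (Or.inr ⟨rfl, hw⟩)), by omega, by push_cast; rfl⟩
  · have hx0 : x ≠ 0 := by rintro rfl; exact hC (dvd_zero _)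
    obtain ⟨k, d, hd, rfl⟩ := Nat.exists_eq_pow_mul_and_not_dvd hx0 p hp.ne_one
    have hk0 : k ≠ 0 := by rintro rfl; simp_all
    have hk : k ≤ r - r' := by
      by_contra hk
      exact hC (Dvd.dvd.mul_right (pow_dvd_pow p (by omega)) d)
    refine ⟨(k, d % p ^ r'), mem_repIndex.2 (Or.inr (Or.inl ⟨by omega, hk,
      Nat.mod_lt _ (pow_pos hp.pos r'), by rwa [Nat.dvd_mod_iff (dvd_pow_self p hr')]⟩)), hk0, ?_⟩
    push_cast
    exact line_pow_mul_eq_mod hp hr' hrr hd k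

theorem exists_rep (hp : p.Prime) (hr' : r' ≠ 0) (hrr : r' ≤ r) (hac : IsCoprime a c) :
    ∃ i ∈ repIndex p r r',
      line (p ^ r) (p ^ r') c a = line (p ^ r) (p ^ r') (rep p i).2 (rep p i).1 := by
  have hN' : ((p ^ r' : ℕ) : ℤ) ∣ ((p ^ r : ℕ) : ℤ) := Int.natCast_dvd_natCast.2 (pow_dvd_pow p hrr)
  by_cases hpc : (p : ℤ) ∣ c
  · have : NeZero (p ^ r) := ⟨pow_ne_zero r hp.ne_zero⟩
    obtain ⟨u, hu, huN⟩ := Int.exists_mul_modEq_one_of_isCoprime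
      (isCoprime_pow_of_isCoprime hp hac.symm hpc r)
    have hx : ((((u * c : ℤ) : ZMod (p ^ r)).val : ℤ) : ZMod (p ^ r)) =
        ((u * c : ℤ) : ZMod (p ^ r)) := by
      simp
    have hpx : p ∣ ((u * c : ℤ) : ZMod (p ^ r)).val := by
      have := ((ZMod.intCast_eq_intCast_iff _ _ _).1 hx).of_dvd (prime_dvd_pow (k := r) (by omega))
      exact Int.natCast_dvd_natCast.1 (this.dvd_iff.2 (dvd_mul_of_dvd_right hpc u))
    obtain ⟨i, hi, hi0, h⟩ := exists_mem_repIndex_of_dvd hp hr' hrr (ZMod.val_lt _) hpx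
    refine ⟨i, hi, ?_⟩
    rw [rep, if_neg hi0, ← h, line_eq_of_modEq (pow_dvd_pow p hrr) huN (Int.ModEq.refl _)
      (hu.of_dvd hN')]
    exact line_congr hx.symm rfl
  · obtain ⟨t, ht, h⟩ := exists_line_eq_line_one hp hrr hpc (a := a)
    exact ⟨(0, t), mem_repIndex.2 (Or.inl ⟨rfl, ht⟩), by simpa [rep] using h⟩

lemma eq_of_line_pow_eq (hp : p.Prime) (hr' : r' ≠ 0) (hrr : r' ≤ r) {k k' u u' : ℕ}
    (hi : (1 ≤ k ∧ k ≤ r - r' ∧ u < p ^ r' ∧ ¬ p ∣ u) ∨ (k = r - r' + 1 ∧ u < p ^ (r' - 1)))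
    (hj : (1 ≤ k' ∧ k' ≤ r - r' ∧ u' < p ^ r' ∧ ¬ p ∣ u') ∨ (k' = r - r' + 1 ∧ u' < p ^ (r' - 1)))
    (h : line (p ^ r) (p ^ r') ((p : ℤ) ^ k * u) 1 = line (p ^ r) (p ^ r') ((p : ℤ) ^ k' * u') 1) :
    k = k' ∧ u = u' := by
  have hle : k' ≤ k := by
    rcases hi with ⟨-, -, -, hu⟩ | ⟨rfl, -⟩
    · exact le_of_line_pow_eq hp hr' (by exact_mod_cast hu) (by omega) h
    · omega
  have hge : k ≤ k' := by
    rcases hj with ⟨-, -, -, hu'⟩ | ⟨rfl, -⟩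
    · exact le_of_line_pow_eq hp hr' (by exact_mod_cast hu') (by omega) h.symm
    · omega
  obtain rfl : k = k' := le_antisymm hge hle
  have hbound : ∀ {v : ℕ}, (1 ≤ k ∧ k ≤ r - r' ∧ v < p ^ r' ∧ ¬ p ∣ v) ∨
      (k = r - r' + 1 ∧ v < p ^ (r' - 1)) → v < p ^ min r' (r - k) := by
    rintro v (⟨-, hk, hv, -⟩ | ⟨hk, hv⟩)
    · rwa [min_eq_left (by omega)]
    · rwa [show min r' (r - k) = r' - 1 by omega]
  have hmod := modEq_of_line_pow_eq hp (by omega) h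
  refine ⟨rfl, Nat.ModEq.eq_of_lt_of_lt (Int.natCast_modEq_iff.1 ?_) (hbound hi) (hbound hj)⟩
  rwa [Nat.cast_pow]

theorem rep_injOn (hp : p.Prime) (hr' : r' ≠ 0) (hrr : r' ≤ r) :
    Set.InjOn (fun i => line (p ^ r) (p ^ r') (rep p i).2 (rep p i).1) (repIndex p r r') := by
  rintro ⟨k, u⟩ hi ⟨k', u'⟩ hj h
  rw [Finset.mem_coe, mem_repIndex] at hi hj
  simp only [rep] at h
  rcases eq_or_ne k 0 with rfl | hk <;> rcases eq_or_ne k' 0 with rfl | hk'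
  · simp only [if_true] at h
    have hu : u < p ^ r' := by omega
    have hu' : u' < p ^ r' := by omega
    exact Prod.ext rfl (Nat.ModEq.eq_of_lt_of_lt (Int.natCast_modEq_iff.1
      (modEq_of_line_one_eq (pow_dvd_pow p hrr) h)) hu hu')
  · simp only [if_true, if_neg hk'] at h
    exact absurd h (line_one_ne_line hp hr' hrr (dvd_mul_of_dvd_left (dvd_pow_self _ hk') _))
  · simp only [if_true, if_neg hk] at h
    exact absurd h.symm (line_one_ne_line hp hr' hrr (dvd_mul_of_dvd_left (dvd_pow_self _ hk) _))
  · simp only [if_neg hk, if_neg hk'] at h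
    obtain ⟨rfl, rfl⟩ := eq_of_line_pow_eq hp hr' hrr (by omega) (by omega) h
    rfl

end Representatives

section Count

def H1Set (N N' : ℕ) : Set (AddSubgroup (Dty N N')) :=
  {H | ∃ a c : ℤ, Int.gcd a c = 1 ∧ 0 ≤ c ∧ H = H1 N N' a c}

lemma setOf_H1_or_H2_eq (N N' : ℕ) :
    {H : AddSubgroup (Dty N N') | ∃ a c : ℤ, Int.gcd a c = 1 ∧ 0 ≤ c ∧
      (H = H1 N N' a c ∨ H = H2 N N' a c)} =
      H1Set N N' ∪ (fun H => H.map (swapYZ N N').toAddMonoidHom) '' H1Set N N' := by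
  ext H
  simp only [H1Set, Set.mem_union, Set.mem_image]
  constructor
  · rintro ⟨a, c, hac, hc, rfl | rfl⟩
    · exact Or.inl ⟨a, c, hac, hc, rfl⟩
    · exact Or.inr ⟨_, ⟨-a, c, by rwa [Int.neg_gcd], hc, rfl⟩, by rw [map_swapYZ_H1, neg_neg]⟩
  · rintro (⟨a, c, hac, hc, rfl⟩ | ⟨_, ⟨a, c, hac, hc, rfl⟩, rfl⟩)
    · exact ⟨a, c, hac, hc, Or.inl rfl⟩
    · exact ⟨-a, c, by rwa [Int.neg_gcd], hc, Or.inr map_swapYZ_H1⟩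

variable {p r r' : ℕ}

lemma disjoint_H1Set (hp : p.Prime) (hr' : r' ≠ 0) (hrr : r' ≤ r) :
    Disjoint (H1Set (p ^ r) (p ^ r'))
      ((fun H => H.map (swapYZ (p ^ r) (p ^ r')).toAddMonoidHom) '' H1Set (p ^ r) (p ^ r')) := by
  rw [Set.disjoint_left]
  rintro _ ⟨a, c, hac, -, rfl⟩ ⟨_, ⟨a', c', hac', -, rfl⟩, h⟩
  dsimp only at h
  rw [map_swapYZ_H1] at h
  exact H1_ne_H2 hp hr' hrr (Int.isCoprime_iff_gcd_eq_one.2 hac)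
    (Int.isCoprime_iff_gcd_eq_one.2 (by rwa [Int.neg_gcd])) h.symm

lemma H1Set_eq_image (hp : p.Prime) (hr' : r' ≠ 0) (hrr : r' ≤ r) :
    H1Set (p ^ r) (p ^ r') =
      (fun i => H1 (p ^ r) (p ^ r') (rep p i).1 (rep p i).2) '' repIndex p r r' := by
  have hrep : ∀ i : ℕ × ℕ, Int.gcd (rep p i).1 (rep p i).2 = 1 ∧ 0 ≤ (rep p i).2 := by
    intro i
    unfold rep
    split_ifs <;> exact ⟨by simp, by positivity⟩
  ext H
  constructor
  · rintro ⟨a, c, hac, -, rfl⟩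
    obtain ⟨i, hi, h⟩ := exists_rep hp hr' hrr (Int.isCoprime_iff_gcd_eq_one.2 hac)
    exact ⟨i, hi, ((H1_eq_H1_iff hp hr' hrr (Int.isCoprime_iff_gcd_eq_one.2 (hrep i).1)
      (Int.isCoprime_iff_gcd_eq_one.2 hac)).2 h.symm)⟩
  · rintro ⟨i, -, rfl⟩
    exact ⟨_, _, (hrep i).1, (hrep i).2, rfl⟩

lemma ncard_H1Set (hp : p.Prime) (hr' : r' ≠ 0) (hrr : r' ≤ r) :
    (H1Set (p ^ r) (p ^ r')).ncard = (repIndex p r r').card := by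
  rw [H1Set_eq_image hp hr' hrr, Set.InjOn.ncard_image, Set.ncard_coe_finset]
  exact fun i hi j hj h => rep_injOn hp hr' hrr hi hj (line_eq_of_H1_eq h)

end Count

end CuspCount

open CuspCount in
/-- the number of distinct self-dual isotropic subgroups of
`(ℤ/p^rℤ)² ⊕ (ℤ/p^{r'}ℤ)²` of the form `H¹_{a,c}` or `H²_{a,c}` equals
`2((r - r' + 1)p^{r'} - (r - r' - 1)p^{r'-1})`. -/
theorem stmt5 (p r r' : ℕ) (hp : p.Prime) (h1 : 1 ≤ r') (hrr : r' ≤ r) :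
    (Nat.card {H : AddSubgroup (Dty (p ^ r) (p ^ r')) |
        ∃ a c : ℤ, Int.gcd a c = 1 ∧ 0 ≤ c ∧
          (H = H1 (p ^ r) (p ^ r') a c ∨ H = H2 (p ^ r) (p ^ r') a c)} : ℤ) =
      2 * (((r : ℤ) - (r' : ℤ) + 1) * (p : ℤ) ^ r' - ((r : ℤ) - (r' : ℤ) - 1) * (p : ℤ) ^ (r' - 1)) := by
  have hr' : r' ≠ 0 := by omega
  have : NeZero (p ^ r) := ⟨pow_ne_zero r hp.ne_zero⟩
  have : NeZero (p ^ r') := ⟨pow_ne_zero r' hp.ne_zero⟩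
  have : Finite (AddSubgroup (Dty (p ^ r) (p ^ r'))) := Finite.of_injective _ SetLike.coe_injective
  rw [Nat.card_coe_set_eq, setOf_H1_or_H2_eq, Set.ncard_union_eq (disjoint_H1Set hp hr' hrr),
    Set.ncard_image_of_injective _ (map_injective (swapYZ _ _).injective),
    ncard_H1Set hp hr' hrr, card_repIndex hp hr', Nat.totient_prime_pow hp (Nat.pos_of_ne_zero hr')]
  obtain ⟨s, rfl⟩ := Nat.exists_eq_add_of_le hrr
  obtain ⟨t, rfl⟩ := Nat.exists_eq_add_of_le' (Nat.one_le_iff_ne_zero.2 hr')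
  simp only [Nat.add_sub_cancel_left, Nat.add_sub_cancel]
  push_cast [Nat.cast_sub hp.one_le]
  ring
end

section
/- In the setting of the linear relation among characteristic functions of types H^*_{a,c} in D = (ℤ/p^rℤ)² ⊕ (ℤ/p^{r'}ℤ)² (r ≥ r' ≥ 1), every element λ = x·(ap^{r-r'}, 0, 0, -1) + y·(0,1,a,0) with x ∈ ℤ/p^{r'}ℤ, y ∈ ℤ/p^rℤ, λ ≠ 0, lies in exactly p^{min(r_x, r_y)} of the subgroups H^1_{ã,1} (ã ∈ ℤ/p^{r'}ℤ), where p^{r_x} = gcd(x, p^{r'}) and p^{r_y} = gcd(y, p^{r'}). -/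
/-- The first generator `(a·p^{r-r'}, 0, 0, -1)` of `H¹_{a,1}`. -/
def G1 (p r r' : ℕ) (a : ℤ) : Dty (p ^ r) (p ^ r') :=
  ((((a * (p : ℤ) ^ (r - r') : ℤ) : ZMod (p ^ r)), (0 : ZMod (p ^ r))),
    ((0 : ZMod (p ^ r')), ((-1 : ℤ) : ZMod (p ^ r'))))

/-- The second generator `(0, 1, a, 0)` of `H¹_{a,1}`. -/
def G2 (p r r' : ℕ) (a : ℤ) : Dty (p ^ r) (p ^ r') :=
  (((0 : ZMod (p ^ r)), (1 : ZMod (p ^ r))), ((a : ZMod (p ^ r')), (0 : ZMod (p ^ r'))))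

lemma zsmul_G1_add_zsmul_G2 (p r r' : ℕ) (a m n : ℤ) :
    m • G1 p r r' a + n • G2 p r r' a =
      ((((m * a * (p : ℤ) ^ (r - r') : ℤ) : ZMod (p ^ r)), ((n : ℤ) : ZMod (p ^ r))),
        (((n * a : ℤ) : ZMod (p ^ r')), ((-m : ℤ) : ZMod (p ^ r')))) := by
  simp [G1, G2, mul_assoc]

lemma mem_closure_G1_G2_iff {p r r' : ℕ} (hp : 0 < p) (hrr : r' ≤ r) (a t x y : ℤ) :
    x • G1 p r r' a + y • G2 p r r' a ∈ AddSubgroup.closure {G1 p r r' t, G2 p r r' t} ↔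
      x * t ≡ x * a [ZMOD (p : ℤ) ^ r'] ∧ y * t ≡ y * a [ZMOD (p : ℤ) ^ r'] := by
  have hpow : (p : ℤ) ^ r = (p : ℤ) ^ r' * (p : ℤ) ^ (r - r') := by
    rw [← pow_add, Nat.add_sub_cancel' hrr]
  have hP : (p : ℤ) ^ (r - r') ≠ 0 := by positivity
  simp only [AddSubgroup.mem_closure_pair, zsmul_G1_add_zsmul_G2, Prod.mk.injEq,
    ZMod.intCast_eq_intCast_iff, Nat.cast_pow, hpow, Int.neg_modEq_neg]
  constructor
  · rintro ⟨m, n, ⟨h1, h2⟩, h3, h4⟩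
    refine ⟨Int.ModEq.mul_right_cancel' hP ?_, ((h2.of_mul_right _).symm.mul_right t).trans h3⟩
    exact (h4.symm.mul_right t).mul_right'.trans h1
  · rintro ⟨hx, hy⟩
    exact ⟨x, y, ⟨hx.mul_right', rfl⟩, hy, rfl⟩

lemma le_of_gcd_eq_pow {p n k : ℕ} (hp : 1 < p) {x : ℤ} (hx : Int.gcd x ((p : ℤ) ^ n) = p ^ k) :
    k ≤ n := by
  refine (Nat.pow_dvd_pow_iff_le_right hp).mp ?_
  rw [← hx]
  exact_mod_cast Int.gcd_dvd_right x ((p : ℤ) ^ n)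

lemma mul_modEq_mul_left_iff_of_gcd_eq_pow {p n k : ℕ} (hp : 1 < p) {x : ℤ}
    (hx : Int.gcd x ((p : ℤ) ^ n) = p ^ k) (t a : ℤ) :
    x * t ≡ x * a [ZMOD (p : ℤ) ^ n] ↔ t ≡ a [ZMOD (p : ℤ) ^ (n - k)] := by
  have hpow : (p : ℤ) ^ n = (p : ℤ) ^ k * (p : ℤ) ^ (n - k) := by
    rw [← pow_add, Nat.add_sub_cancel' (le_of_gcd_eq_pow hp hx)]
  have hgcd : gcd ((p : ℤ) ^ n) x = (p : ℤ) ^ k := by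
    rw [← Int.coe_gcd, Int.gcd_comm, hx, Nat.cast_pow]
  rw [Int.modEq_iff_dvd, Int.modEq_iff_dvd, ← mul_sub, ← dvd_gcd_mul_iff_dvd_mul, hgcd, hpow,
    mul_dvd_mul_iff_left (by positivity)]

lemma modEq_pow_sub_and_modEq_pow_sub_iff (p n i j : ℕ) (t a : ℤ) :
    t ≡ a [ZMOD (p : ℤ) ^ (n - i)] ∧ t ≡ a [ZMOD (p : ℤ) ^ (n - j)] ↔
      t ≡ a [ZMOD (p : ℤ) ^ (n - min i j)] := by
  rcases le_total i j with h | h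
  · rw [min_eq_left h]
    exact ⟨And.left, fun hi => ⟨hi, hi.of_dvd (pow_dvd_pow _ (by omega))⟩⟩
  · rw [min_eq_right h]
    exact ⟨And.right, fun hj => ⟨hj.of_dvd (pow_dvd_pow _ (by omega)), hj⟩⟩

lemma card_filter_range_intCast_modEq {N K : ℕ} (hK : 0 < K) (hKN : K ∣ N) (a : ℤ) :
    (Finset.filter (fun t : ℕ => (t : ℤ) ≡ a [ZMOD K]) (Finset.range N)).card = N / K := by
  have : NeZero K := NeZero.of_pos hK
  have hcond : ∀ t : ℕ, (t : ℤ) ≡ a [ZMOD K] ↔ t ≡ (a : ZMod K).val [MOD K] := fun t => by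
    rw [← ZMod.intCast_eq_intCast_iff, ← ZMod.natCast_eq_natCast_iff, ZMod.natCast_zmod_val,
      Int.cast_natCast]
  simp_rw [hcond, ← Nat.count_eq_card_filter_range, Nat.count_modEq_card N hK,
    Nat.mod_eq_zero_of_dvd hKN]
  simp

open Classical in
theorem stmt8_general (p r r' : ℕ) (hp : p.Prime) (hrr : r' ≤ r)
    (a x y : ℤ) (rx ry : ℕ)
    (hrx : Int.gcd x ((p : ℤ) ^ r') = p ^ rx)
    (hry : Int.gcd y ((p : ℤ) ^ r') = p ^ ry)
    (lam : Dty (p ^ r) (p ^ r'))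
    (hlam : lam = x • G1 p r r' a + y • G2 p r r' a) :
    (Finset.filter
        (fun t : ℕ => lam ∈ AddSubgroup.closure {G1 p r r' (t : ℤ), G2 p r r' (t : ℤ)})
        (Finset.range (p ^ r'))).card = p ^ min rx ry := by
  have hm : min rx ry ≤ r' := (min_le_left _ _).trans (le_of_gcd_eq_pow hp.one_lt hrx)
  have hmem : ∀ t : ℕ, lam ∈ AddSubgroup.closure {G1 p r r' (t : ℤ), G2 p r r' (t : ℤ)} ↔
      (t : ℤ) ≡ a [ZMOD ((p ^ (r' - min rx ry) : ℕ) : ℤ)] := fun t => by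
    rw [hlam, mem_closure_G1_G2_iff hp.pos hrr, mul_modEq_mul_left_iff_of_gcd_eq_pow hp.one_lt hrx,
      mul_modEq_mul_left_iff_of_gcd_eq_pow hp.one_lt hry, modEq_pow_sub_and_modEq_pow_sub_iff,
      Nat.cast_pow]
  rw [Finset.filter_congr fun t _ => hmem t,
    card_filter_range_intCast_modEq (pow_pos hp.pos _) (pow_dvd_pow _ (Nat.sub_le _ _)),
    Nat.pow_div (Nat.sub_le _ _) hp.pos, Nat.sub_sub_self hm]

open Classical in
/-- a nonzero element `λ = x·(ap^{r-r'},0,0,-1) + y·(0,1,a,0)` lies in exactly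
`p^{min(r_x, r_y)}` of the subgroups `H¹_{ã,1}`, where `p^{r_x} = gcd(x, p^{r'})` and
`p^{r_y} = gcd(y, p^{r'})`. -/
theorem stmt8 (p r r' : ℕ) (hp : p.Prime) (h1 : 1 ≤ r') (hrr : r' ≤ r)
    (a x y : ℤ) (rx ry : ℕ)
    (hrx : Int.gcd x ((p : ℤ) ^ r') = p ^ rx)
    (hry : Int.gcd y ((p : ℤ) ^ r') = p ^ ry)
    (lam : Dty (p ^ r) (p ^ r'))
    (hlam : lam = x • G1 p r r' a + y • G2 p r r' a)
    (hne : lam ≠ 0) :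
    (Finset.filter
        (fun t : ℕ => lam ∈ AddSubgroup.closure {G1 p r r' (t : ℤ), G2 p r r' (t : ℤ)})
        (Finset.range (p ^ r'))).card = p ^ min rx ry :=
  stmt8_general p r r' hp hrr a x y rx ry hrx hry lam hlam
end

section
/- For coprime integers a, c (c ≥ 0) and the lattice L = {(a b; c d) ∈ M₂(ℤ) : (N/N') | c} with q(X) = -N'det(X) (N' | N), the plane I¹_{a,c} = span{(a 0; c 0), (0 a; 0 c)} ⊆ L ⊗ ℚ is a 2-dimensional totally isotropic subspace, and the vectors z = (0 a; 0 c) and z̃ = (N/(N'M))·(a 0; c 0), where M = gcd(N/N', c), are primitive isotropic vectors of L. -/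
/-!
Both generators have their two columns proportional to `(a, c)`, so every matrix in their span
has determinant zero, and they are independent as soon as `(a, c) ≠ 0`. A lattice vector whose
only nonzero column is `(x, (N/N')·y)` with `x, y` coprime integers is primitive: writing it as
`k • W` with `W ∈ L` makes `k` divide both `x` and `y`. For `z̃`, with `e = N/N'` and
`M = gcd(e, c)`, the scalar `N/(N'M)` is the integer `e/M` and the lower entry is `e·(c/M)`; the
pair `((e/M)·a, c/M)` is coprime because `e/M ⟂ c/M` and `a ⟂ c`.
-/

def memL (N N' : ℕ) (X : Matrix (Fin 2) (Fin 2) ℚ) : Prop :=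
  (∃ n : ℤ, X 0 0 = n) ∧ (∃ n : ℤ, X 0 1 = n) ∧
    (∃ n : ℤ, X 1 0 = ((N : ℚ) / (N' : ℚ)) * n) ∧ (∃ n : ℤ, X 1 1 = n)

def primitiveL (N N' : ℕ) (X : Matrix (Fin 2) (Fin 2) ℚ) : Prop :=
  memL N N' X ∧ ∀ k : ℤ, 1 < k → ∀ W, memL N N' W → k • W ≠ X

open Matrix

section ColumnPlane

variable {R : Type*} [CommRing R]

theorem smul_add_smul_columns (a c s t : R) :
    s • !![a, 0; c, 0] + t • !![0, a; 0, c] = !![s * a, t * a; s * c, t * c] := by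
  ext i j
  fin_cases i <;> fin_cases j <;> simp

theorem det_smul_add_smul_columns (a c s t : R) :
    (s • !![a, 0; c, 0] + t • !![0, a; 0, c]).det = 0 := by
  rw [smul_add_smul_columns, det_fin_two_of]
  ring

theorem det_eq_zero_of_mem_span_columns {a c : R} {X : Matrix (Fin 2) (Fin 2) R}
    (hX : X ∈ Submodule.span R {!![a, 0; c, 0], !![0, a; 0, c]}) : X.det = 0 := by
  obtain ⟨s, t, rfl⟩ := Submodule.mem_span_pair.1 hX
  exact det_smul_add_smul_columns a c s t

theorem linearIndependent_columns [NoZeroDivisors R] {a c : R} (h : a ≠ 0 ∨ c ≠ 0) :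
    LinearIndependent R ![!![a, 0; c, 0], !![0, a; 0, c]] := by
  rw [LinearIndependent.pair_iff]
  intro s t hst
  simp only [smul_add_smul_columns, ← ext_iff, Fin.forall_fin_two, of_apply, cons_val',
    cons_val_zero, cons_val_one, cons_val_fin_one, Matrix.zero_apply, mul_eq_zero] at hst
  tauto

theorem finrank_span_columns {K : Type*} [Field K] {a c : K} (h : a ≠ 0 ∨ c ≠ 0) :
    Module.finrank K (Submodule.span K {!![a, 0; c, 0], !![0, a; 0, c]}) = 2 := by
  have := finrank_span_eq_card (linearIndependent_columns h)
  rwa [range_cons_cons_empty, Fintype.card_fin] at this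

end ColumnPlane

section Primitive

variable {N N' : ℕ}

theorem primitiveL_of_isCoprime_col_one {x y : ℤ} (h : IsCoprime x y) :
    primitiveL N N' !![0, (x : ℚ); 0, (y : ℚ)] := by
  refine ⟨⟨⟨0, by simp⟩, ⟨x, by simp⟩, ⟨0, by simp⟩, ⟨y, by simp⟩⟩, ?_⟩
  rintro k hk W ⟨-, ⟨n, hn⟩, -, ⟨m, hm⟩⟩ hW
  have hkx : k * n = x := by
    exact_mod_cast (by simpa [hn] using congrFun (congrFun hW 0) 1 : (k : ℚ) * n = x)
  have hky : k * m = y := by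
    exact_mod_cast (by simpa [hm] using congrFun (congrFun hW 1) 1 : (k : ℚ) * m = y)
  have := Int.isUnit_iff.1 (h.isUnit_of_dvd' ⟨n, hkx.symm⟩ ⟨m, hky.symm⟩)
  omega

theorem primitiveL_of_isCoprime_col_zero (hN : N ≠ 0) (hN' : N' ≠ 0) {x y : ℤ}
    (h : IsCoprime x y) : primitiveL N N' !![(x : ℚ), 0; (N : ℚ) / N' * y, 0] := by
  refine ⟨⟨⟨x, by simp⟩, ⟨0, by simp⟩, ⟨y, by simp⟩, ⟨0, by simp⟩⟩, ?_⟩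
  rintro k hk W ⟨⟨n, hn⟩, -, ⟨m, hm⟩, -⟩ hW
  have hkx : k * n = x := by
    exact_mod_cast (by simpa [hn] using congrFun (congrFun hW 0) 0 : (k : ℚ) * n = x)
  have hky : k * m = y := by
    have hNN' : (N : ℚ) / N' ≠ 0 := by positivity
    have h10 : (k : ℚ) * (N / N' * m) = N / N' * y := by
      simpa [hm] using congrFun (congrFun hW 1) 0
    have : (N : ℚ) / N' * (k * m) = N / N' * y := by rw [← h10]; ring
    exact_mod_cast mul_left_cancel₀ hNN' this
  have := Int.isUnit_iff.1 (h.isUnit_of_dvd' ⟨n, hkx.symm⟩ ⟨m, hky.symm⟩)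
  omega

end Primitive

theorem scaled_column_eq {N N' g : ℕ} (hdvd : N' ∣ N) (hg : g ∣ N / N') (a : ℤ) {c : ℤ}
    (hgc : (g : ℤ) ∣ c) :
    !![(N : ℚ) / (N' * g) * a, 0; (N : ℚ) / (N' * g) * c, 0] =
      !![(((N / N' / g : ℕ) * a : ℤ) : ℚ), 0; (N : ℚ) / N' * ((c / g : ℤ) : ℚ), 0] := by
  have hs : (N : ℚ) / (N' * g) = ((N / N' / g : ℕ) : ℚ) := by
    rw [Nat.cast_div_charZero hg, Nat.cast_div_charZero hdvd, div_div]
  rw [Int.cast_mul, Int.cast_natCast, ← hs, Int.cast_div_charZero hgc, Int.cast_natCast,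
    show (N : ℚ) / (N' * g) * c = N / N' * (c / g) by ring]

theorem isCoprime_div_gcd_mul {e : ℕ} (he : e ≠ 0) {a c : ℤ} (hac : IsCoprime a c) :
    IsCoprime (((e / Nat.gcd e c.natAbs : ℕ) : ℤ) * a) (c / (Nat.gcd e c.natAbs : ℕ)) := by
  have hg : 0 < Int.gcd e c := Int.gcd_pos_of_ne_zero_left _ (by exact_mod_cast he)
  have hdiv : IsCoprime ((e : ℤ) / Int.gcd e c) (c / Int.gcd e c) :=
    Int.isCoprime_iff_gcd_eq_one.2 (Int.gcd_div_gcd_div_gcd hg)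
  push_cast
  exact hdiv.mul_left (hac.of_isCoprime_of_dvd_right (Int.ediv_dvd_of_dvd (Int.gcd_dvd_right _ _)))

theorem stmt12_general (N N' : ℕ) (hN : 0 < N) (hN' : 0 < N') (hdvd : N' ∣ N) (a c : ℤ)
    (hcop : Int.gcd a c = 1) :
    Module.finrank ℚ
        ↥(Submodule.span ℚ ({!![(a : ℚ), 0; (c : ℚ), 0], !![0, (a : ℚ); 0, (c : ℚ)]} :
          Set (Matrix (Fin 2) (Fin 2) ℚ))) = 2 ∧
    (∀ X ∈ Submodule.span ℚ ({!![(a : ℚ), 0; (c : ℚ), 0], !![0, (a : ℚ); 0, (c : ℚ)]} :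
        Set (Matrix (Fin 2) (Fin 2) ℚ)), -(N' : ℚ) * Matrix.det X = 0) ∧
    primitiveL N N' !![0, (a : ℚ); 0, (c : ℚ)] ∧
    -(N' : ℚ) * Matrix.det !![0, (a : ℚ); 0, (c : ℚ)] = 0 ∧
    primitiveL N N'
      !![((N : ℚ) / ((N' : ℚ) * (Nat.gcd (N / N') c.natAbs : ℚ))) * (a : ℚ), 0;
         ((N : ℚ) / ((N' : ℚ) * (Nat.gcd (N / N') c.natAbs : ℚ))) * (c : ℚ), 0] ∧
    -(N' : ℚ) * Matrix.det
      !![((N : ℚ) / ((N' : ℚ) * (Nat.gcd (N / N') c.natAbs : ℚ))) * (a : ℚ), 0;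
         ((N : ℚ) / ((N' : ℚ) * (Nat.gcd (N / N') c.natAbs : ℚ))) * (c : ℚ), 0] = 0 := by
  have hac : IsCoprime a c := Int.isCoprime_iff_gcd_eq_one.2 hcop
  have hac0 : (a : ℚ) ≠ 0 ∨ (c : ℚ) ≠ 0 := by
    by_contra! h
    simp_all
  have he : N / N' ≠ 0 := (Nat.div_pos (Nat.le_of_dvd hN hdvd) hN').ne'
  refine ⟨finrank_span_columns hac0,
    fun X hX ↦ by rw [det_eq_zero_of_mem_span_columns hX, mul_zero],
    primitiveL_of_isCoprime_col_one hac, by simp [det_fin_two], ?_, by simp [det_fin_two]⟩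
  rw [scaled_column_eq hdvd (Nat.gcd_dvd_left _ _) a (Int.natCast_dvd.2 (Nat.gcd_dvd_right _ _))]
  exact primitiveL_of_isCoprime_col_zero hN.ne' hN'.ne' (isCoprime_div_gcd_mul he hac)

/-- for coprime `a, c` with `c ≥ 0`, the plane
`I¹_{a,c} = span{(a 0; c 0), (0 a; 0 c)}` is a 2-dimensional totally isotropic subspace of
`L ⊗ ℚ`, and `z = (0 a; 0 c)` and `z̃ = (N/(N'M))·(a 0; c 0)` (with `M = gcd(N/N', c)`) are
primitive isotropic vectors of `L`. -/
theorem stmt12 (N N' : ℕ) (hN : 0 < N) (hN' : 0 < N') (hdvd : N' ∣ N) (a c : ℤ)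
    (hcop : Int.gcd a c = 1) (hc : 0 ≤ c) :
    Module.finrank ℚ
        ↥(Submodule.span ℚ ({!![(a : ℚ), 0; (c : ℚ), 0], !![0, (a : ℚ); 0, (c : ℚ)]} :
          Set (Matrix (Fin 2) (Fin 2) ℚ))) = 2 ∧
    (∀ X ∈ Submodule.span ℚ ({!![(a : ℚ), 0; (c : ℚ), 0], !![0, (a : ℚ); 0, (c : ℚ)]} :
        Set (Matrix (Fin 2) (Fin 2) ℚ)), -(N' : ℚ) * Matrix.det X = 0) ∧
    primitiveL N N' !![0, (a : ℚ); 0, (c : ℚ)] ∧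
    -(N' : ℚ) * Matrix.det !![0, (a : ℚ); 0, (c : ℚ)] = 0 ∧
    primitiveL N N'
      !![((N : ℚ) / ((N' : ℚ) * (Nat.gcd (N / N') c.natAbs : ℚ))) * (a : ℚ), 0;
         ((N : ℚ) / ((N' : ℚ) * (Nat.gcd (N / N') c.natAbs : ℚ))) * (c : ℚ), 0] ∧
    -(N' : ℚ) * Matrix.det
      !![((N : ℚ) / ((N' : ℚ) * (Nat.gcd (N / N') c.natAbs : ℚ))) * (a : ℚ), 0;
         ((N : ℚ) / ((N' : ℚ) * (Nat.gcd (N / N') c.natAbs : ℚ))) * (c : ℚ), 0] = 0 :=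
  stmt12_general N N' hN hN' hdvd a c hcop
end

section
/- Let L = U ⊕ U(N) realized as {(a b; c d) ∈ M₂(ℤ) : N | c} with q(X) = -det(X). The types of one-dimensional cusps H_{a,c} ⊆ L'/L ≅ (ℤ/Nℤ)² depend only on d = N/gcd(N,c); concretely, for coprime (a,c) with M = gcd(N,c), the type is the cyclic subgroup generated by ((N/M)a, 0) and (0, c) in (ℤ/Nℤ)², which equals ⟨(N/M, 0), (0, M)⟩, depending only on M. Consequently the number of types equals the number of divisors of N. -/
/-!
The cyclic subgroup of `ZMod N` generated by the image of `k : ℤ` depends only on `gcd(k, N)`: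
the kernel of `ℤ → ZMod N` is `Nℤ`, and `kℤ + Nℤ = gcd(k, N)ℤ`. With `M = gcd(N, c)` we have
`M ∣ c`, hence `gcd(a, M) = 1`, so `gcd((N/M)a, N) = N/M` and `gcd(c, N) = M`; the type is therefore
`⟨N/M⟩ × ⟨M⟩`. Every divisor `M` of `N` occurs (take `a = 1`, `c = M`), and `M` is recovered from
the type as `N` divided by the order of its second factor, so types correspond to divisors of `N`.
-/

open AddSubgroup

lemma AddSubgroup.closure_pair_eq_prod {G H : Type*} [AddGroup G] [AddGroup H] (u : G) (v : H) :
    closure {((u, 0) : G × H), (0, v)} = (zmultiples u).prod (zmultiples v) := by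
  apply le_antisymm
  · rw [closure_le]
    rintro x (rfl | rfl)
    · exact ⟨mem_zmultiples u, zero_mem _⟩
    · exact ⟨zero_mem _, mem_zmultiples v⟩
  · rintro ⟨x, y⟩ ⟨⟨m, rfl⟩, ⟨n, rfl⟩⟩
    have : (m • u, n • v) = m • ((u, 0) : G × H) + n • ((0, v) : G × H) := by simp
    rw [this]
    exact add_mem (zsmul_mem (subset_closure (by simp)) m)
      (zsmul_mem (subset_closure (by simp)) n)

namespace ZMod

lemma zmultiples_intCast_eq_gcd (N : ℕ) (k : ℤ) :
    zmultiples (k : ZMod N) = zmultiples ((Int.gcd k N : ℤ) : ZMod N) := by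
  set f := Int.castAddHom (ZMod N)
  have hN : (zmultiples (N : ℤ)).map f = ⊥ := by
    simp [f, AddMonoidHom.map_zmultiples]
  calc zmultiples (k : ZMod N)
      = (zmultiples k).map f ⊔ (zmultiples (N : ℤ)).map f := by
        rw [hN, sup_bot_eq, AddMonoidHom.map_zmultiples]; rfl
    _ = zmultiples ((Int.gcd k N : ℤ) : ZMod N) := by
        rw [← AddSubgroup.map_sup, Int.zmultiples_sup, AddMonoidHom.map_zmultiples]; rfl

lemma zmultiples_intCast_eq_of_gcd_eq {N : ℕ} {j k : ℤ} (h : Int.gcd j N = Int.gcd k N) :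
    zmultiples (j : ZMod N) = zmultiples (k : ZMod N) := by
  rw [zmultiples_intCast_eq_gcd N j, zmultiples_intCast_eq_gcd N k, h]

lemma card_zmultiples_natCast_of_dvd {N M : ℕ} (hN : N ≠ 0) (hMN : M ∣ N) :
    Nat.card (zmultiples (M : ZMod N)) = N / M := by
  rw [Nat.card_zmultiples, ZMod.addOrderOf_coe M hN, Nat.gcd_eq_right hMN]

end ZMod

lemma Int.gcd_ediv_mul_of_isCoprime {N M a : ℤ} (hMN : M ∣ N) (ha : IsCoprime a M) :
    Int.gcd (N / M * a) N = Int.gcd (N / M) N := by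
  obtain ⟨d, rfl⟩ := hMN
  rcases eq_or_ne M 0 with rfl | hM
  · simp
  rw [Int.mul_ediv_cancel_left _ hM, mul_comm M d, Int.gcd_mul_left,
    Int.isCoprime_iff_gcd_eq_one.mp ha, mul_one]; simp

def cuspType (N M : ℕ) : AddSubgroup (ZMod N × ZMod N) :=
  closure {((((N : ℤ) / (M : ℤ) : ℤ) : ZMod N), 0), (0, ((M : ℤ) : ZMod N))}

lemma closure_eq_cuspType (N : ℕ) {a c : ℤ} (h : Int.gcd a c = 1) :
    AddSubgroup.closure {((((N : ℤ) / (Nat.gcd N c.natAbs : ℤ) * a : ℤ) : ZMod N), (0 : ZMod N)),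
        ((0 : ZMod N), (c : ZMod N))} = cuspType N (Nat.gcd N c.natAbs) := by
  set M := Nat.gcd N c.natAbs
  have hMN : (M : ℤ) ∣ N := Int.natCast_dvd_natCast.mpr (Nat.gcd_dvd_left _ _)
  have hMc : (M : ℤ) ∣ c := Int.natCast_dvd.mpr (Nat.gcd_dvd_right _ _)
  have ha : IsCoprime a M := (Int.isCoprime_iff_gcd_eq_one.mpr h).of_isCoprime_of_dvd_right hMc
  have hc : Int.gcd c N = Int.gcd M N := by
    simp [M, Int.gcd, Nat.gcd_comm]
  rw [cuspType, closure_pair_eq_prod, closure_pair_eq_prod,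
    ZMod.zmultiples_intCast_eq_of_gcd_eq (Int.gcd_ediv_mul_of_isCoprime hMN ha),
    ZMod.zmultiples_intCast_eq_of_gcd_eq hc]

lemma mk_zero_mem_cuspType_iff {N M : ℕ} {y : ZMod N} :
    ((0, y) ∈ cuspType N M) ↔ y ∈ zmultiples (M : ZMod N) := by
  simp [cuspType, closure_pair_eq_prod, mem_prod]

lemma cuspType_injOn {N : ℕ} (hN : N ≠ 0) : Set.InjOn (cuspType N) N.divisors := by
  intro M hM M' hM' h
  have hsnd : zmultiples (M : ZMod N) = zmultiples (M' : ZMod N) := by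
    ext y
    rw [← mk_zero_mem_cuspType_iff, h, mk_zero_mem_cuspType_iff]
  have hcard := congrArg (fun K : AddSubgroup (ZMod N) => Nat.card K) hsnd
  rw [ZMod.card_zmultiples_natCast_of_dvd hN (Nat.dvd_of_mem_divisors hM),
    ZMod.card_zmultiples_natCast_of_dvd hN (Nat.dvd_of_mem_divisors hM')] at hcard
  rw [← Nat.div_div_self (Nat.dvd_of_mem_divisors hM) hN, hcard,
    Nat.div_div_self (Nat.dvd_of_mem_divisors hM') hN]

lemma mem_image_cuspType_divisors_iff {N : ℕ} (hN : N ≠ 0) {H : AddSubgroup (ZMod N × ZMod N)} :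
    H ∈ cuspType N '' N.divisors ↔
      ∃ a c : ℤ, Int.gcd a c = 1 ∧ 0 ≤ c ∧ H = cuspType N (Nat.gcd N c.natAbs) := by
  constructor
  · rintro ⟨M, hM, rfl⟩
    refine ⟨1, M, Int.gcd_one_left _, Int.natCast_nonneg M, ?_⟩
    rw [Int.natAbs_natCast, Nat.gcd_eq_right (Nat.dvd_of_mem_divisors hM)]
  · rintro ⟨a, c, -, -, rfl⟩
    exact ⟨_, Nat.mem_divisors.mpr ⟨Nat.gcd_dvd_left _ _, hN⟩, rfl⟩

/-- for `L = U ⊕ U(N)`, the type of the cusp `a/c` is the subgroup of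
`(ℤ/Nℤ)²` generated by `((N/M)a, 0)` and `(0, c)`, it equals `⟨(N/M, 0), (0, M)⟩` with
`M = gcd(N, c)`, and the number of types equals the number of divisors of `N`. -/
theorem stmt16 (N : ℕ) (hN : 0 < N) :
    (∀ a c : ℤ, Int.gcd a c = 1 → 0 ≤ c →
      AddSubgroup.closure
          { ((((N : ℤ) / (Nat.gcd N c.natAbs : ℤ) * a : ℤ) : ZMod N), (0 : ZMod N)),
            ((0 : ZMod N), (c : ZMod N)) } =
        AddSubgroup.closure
          { ((((N : ℤ) / (Nat.gcd N c.natAbs : ℤ) : ℤ) : ZMod N), (0 : ZMod N)),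
            ((0 : ZMod N), ((Nat.gcd N c.natAbs : ℤ) : ZMod N)) }) ∧
    Nat.card {H : AddSubgroup (ZMod N × ZMod N) |
      ∃ a c : ℤ, Int.gcd a c = 1 ∧ 0 ≤ c ∧
        H = AddSubgroup.closure
          { ((((N : ℤ) / (Nat.gcd N c.natAbs : ℤ) * a : ℤ) : ZMod N), (0 : ZMod N)),
            ((0 : ZMod N), (c : ZMod N)) }} = N.divisors.card := by
  refine ⟨fun a c h _ => closure_eq_cuspType N h, ?_⟩
  have hcard : Nat.card (cuspType N '' N.divisors) = N.divisors.card := by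
    rw [Nat.card_image_of_injOn (cuspType_injOn hN.ne'), Nat.card_coe_set_eq, Set.ncard_coe_finset]
  rw [← hcard]
  congr 2
  ext H
  rw [mem_image_cuspType_divisors_iff hN.ne']
  exact exists₂_congr fun a c => and_congr_right fun h => and_congr_right fun _ => by
    rw [closure_eq_cuspType N h]
end
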